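/- arXiv:1702.03187 — 7 statements merged into one kernel-verified Lean document; each statement's English description precedes it below -/
import Mathlib

section
/- Fix integers 0 < l < d. The number of subsets I ⊆ {1, …, d} such that |I| is odd and max(I) − min(I) ≤ l equals the number of (possibly empty) cliques of the graph G on vertex set {1, …, d−1} in which distinct vertices i and j are adjacent whenever |i − j| ≤ l − 1. -/
namespace OddSpreadAux

/-- toggle point: `min (min C + l) d` (with `d` for empty `C`). -/
def pp (d l : ℕ) (C : Finset ℕ) : ℕ :=
  min ((if h : C.Nonempty then C.min' h else d) + l) d

/-- forward map: cliques → odd spread-≤-l sets. -/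
def ff (d l : ℕ) (C : Finset ℕ) : Finset ℕ :=
  if Odd C.card then C else insert (pp d l C) C

/-- inverse map. -/
def gg (d l : ℕ) (I : Finset ℕ) : Finset ℕ :=
  if pp d l I ∈ I then I.erase (pp d l I) else I

def IsClq (d l : ℕ) (C : Finset ℕ) : Prop :=
  C ⊆ Finset.Icc 1 (d - 1) ∧
    (C : Set ℕ).Pairwise fun a b => ((a : ℤ) - (b : ℤ)).natAbs ≤ l - 1

def IsOddS (d l : ℕ) (I : Finset ℕ) : Prop :=
  I ⊆ Finset.Icc 1 d ∧ Odd I.card ∧ ∀ h : I.Nonempty, I.max' h - I.min' h ≤ l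

lemma pp_of_nonempty (d l : ℕ) {C : Finset ℕ} (h : C.Nonempty) :
    pp d l C = min (C.min' h + l) d := by simp [pp, h]

lemma pp_of_empty (d l : ℕ) : pp d l (∅ : Finset ℕ) = d := by
  simp [pp, Finset.not_nonempty_empty]

lemma spread_le (J : Finset ℕ) (h : J.Nonempty) (m l : ℕ)
    (hb : ∀ x ∈ J, m ≤ x ∧ x ≤ m + l) : J.max' h - J.min' h ≤ l := by
  have h1 := hb _ (J.max'_mem h)
  have h2 := hb _ (J.min'_mem h)
  omega

lemma mem_lt_pp (d l : ℕ) (hl : 0 < l) {C : Finset ℕ}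
    (hC : IsClq d l C) {x : ℕ} (hx : x ∈ C) : x < pp d l C := by
  have hne : C.Nonempty := ⟨x, hx⟩
  rw [pp_of_nonempty d l hne]
  have hxd := hC.1 hx
  rw [Finset.mem_Icc] at hxd
  have hm : C.min' hne ≤ x := Finset.min'_le _ _ hx
  rcases eq_or_ne x (C.min' hne) with h | h
  · omega
  · have := hC.2 (Finset.mem_coe.mpr hx) (Finset.mem_coe.mpr (C.min'_mem hne)) h
    omega

lemma pp_pos (d l : ℕ) (hl : 0 < l) (hld : l < d) (C : Finset ℕ) : 1 ≤ pp d l C := by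
  have h1 : 1 ≤ (if h : C.Nonempty then C.min' h else d) + l := by omega
  have h2 : (1 : ℕ) ≤ d := by omega
  exact le_min h1 h2

lemma ff_mem (d l : ℕ) (hl : 0 < l) (hld : l < d) {C : Finset ℕ}
    (hC : IsClq d l C) : IsOddS d l (ff d l C) := by
  have hsub : C ⊆ Finset.Icc 1 d := by
    intro x hx
    have := hC.1 hx
    rw [Finset.mem_Icc] at *
    omega
  have hppd : pp d l C ≤ d := min_le_right _ _
  have hpp1 : 1 ≤ pp d l C := pp_pos d l hl hld C
  by_cases hodd : Odd C.card
  · refine ⟨by simpa [ff, hodd] using hsub, by simpa [ff, hodd] using hodd, ?_⟩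
    intro h
    have hne : C.Nonempty := Finset.card_pos.mp (by rcases hodd with ⟨k, hk⟩; omega)
    apply spread_le _ h (C.min' hne) l
    intro x hx
    rw [ff, if_pos hodd] at hx
    have h2 := mem_lt_pp d l hl hC hx
    rw [pp_of_nonempty d l hne] at h2
    exact ⟨Finset.min'_le _ _ hx, by omega⟩
  · have hppC : pp d l C ∉ C := fun hx => absurd (mem_lt_pp d l hl hC hx) (by simp)
    refine ⟨?_, ?_, ?_⟩
    · rw [ff, if_neg hodd]
      intro x hx
      rcases Finset.mem_insert.mp hx with h | h
      · rw [Finset.mem_Icc]; omega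
      · exact hsub h
    · rw [ff, if_neg hodd, Finset.card_insert_of_notMem hppC]
      simpa [Nat.odd_add_one] using (Nat.not_odd_iff_even.mp hodd)
    · intro h
      rcases C.eq_empty_or_nonempty with hCe | hne
      · subst hCe
        apply spread_le _ h d l
        intro x hx
        rw [ff] at hx
        simp [pp_of_empty] at hx
        omega
      · set m := C.min' hne with hm
        have hbound : ∀ x ∈ insert (pp d l C) C, m ≤ x ∧ x ≤ m + l := by
          intro x hx
          rcases Finset.mem_insert.mp hx with h1 | h1
          · subst h1
            rw [pp_of_nonempty d l hne, ← hm]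
            constructor
            · have hmd := hC.1 (C.min'_mem hne); rw [Finset.mem_Icc] at hmd; omega
            · exact min_le_left _ _
          · have h2 := mem_lt_pp d l hl hC h1
            rw [pp_of_nonempty d l hne, ← hm] at h2
            exact ⟨Finset.min'_le _ _ h1, by omega⟩
        apply spread_le _ h m l
        intro x hx
        rw [ff, if_neg hodd] at hx
        exact hbound x hx

lemma gg_clq_and_ff_gg (d l : ℕ) (hl : 0 < l) (hld : l < d) {I : Finset ℕ}
    (hI : IsOddS d l I) : IsClq d l (gg d l I) ∧ ff d l (gg d l I) = I := by
  obtain ⟨hIsub, hIodd, hIspread⟩ := hI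
  have hne : I.Nonempty := by
    rcases I.eq_empty_or_nonempty with h | h
    · subst h; simp at hIodd
    · exact h
  set m := I.min' hne with hm
  set p := pp d l I with hp
  have hpval : p = min (m + l) d := by rw [hp, pp_of_nonempty d l hne]
  have hub : ∀ x ∈ I, x ≤ p := by
    intro x hx
    have hxd := hIsub hx; rw [Finset.mem_Icc] at hxd
    have h1 : x ≤ I.max' hne := Finset.le_max' _ _ hx
    have h2 : m ≤ I.max' hne := Finset.min'_le _ _ (I.max'_mem hne)
    have h3 := hIspread hne
    omega
  have hmI : m ∈ I := I.min'_mem hne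
  have hlb : ∀ x ∈ I, m ≤ x := fun x hx => Finset.min'_le _ _ hx
  by_cases hpI : p ∈ I
  · have hgg : gg d l I = I.erase p := by rw [gg, ← hp, if_pos hpI]
    have herase_mem : ∀ x ∈ I.erase p, 1 ≤ x ∧ x ≤ d - 1 ∧ m ≤ x ∧ x ≤ p - 1 := by
      intro x hx
      obtain ⟨hxp, hxI⟩ := Finset.mem_erase.mp hx
      have hxd := hIsub hxI; rw [Finset.mem_Icc] at hxd
      have h1 := hub x hxI
      have h2 := hlb x hxI
      have h3 : x < p := lt_of_le_of_ne h1 hxp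
      have h4 : p ≤ d := by rw [hpval]; exact min_le_right _ _
      omega
    have hclq : IsClq d l (I.erase p) := by
      constructor
      · intro x hx
        rw [Finset.mem_Icc]
        have := herase_mem x hx
        omega
      · intro a ha b hb hab
        have h1 := herase_mem a (Finset.mem_coe.mp ha)
        have h2 := herase_mem b (Finset.mem_coe.mp hb)
        have : p ≤ m + l := by rw [hpval]; exact min_le_left _ _
        omega
    rw [hgg]
    refine ⟨hclq, ?_⟩
    have hcard : ¬ Odd (I.erase p).card := by
      rw [Finset.card_erase_of_mem hpI, Nat.not_odd_iff_even]
      obtain ⟨k, hk⟩ := hIodd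
      exact ⟨k, by omega⟩
    rw [ff, if_neg hcard]
    rcases (I.erase p).eq_empty_or_nonempty with hE | hEne
    · -- I = {p}, and p = m so p = d
      have hIsing : I = {p} := by
        apply Finset.eq_singleton_iff_unique_mem.mpr
        refine ⟨hpI, fun x hx => ?_⟩
        by_contra hxp
        have : x ∈ I.erase p := Finset.mem_erase.mpr ⟨hxp, hx⟩
        simp [hE] at this
      have hmp : m = p := by
        have : m ∈ ({p} : Finset ℕ) := hIsing ▸ hmI
        simpa using this
      have hpd : p = d := by
        have hmd : m ≤ d := by
          have := hIsub hmI; rw [Finset.mem_Icc] at this; omega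
        rcases min_choice (m + l) d with h | h <;> omega
      rw [hE, pp_of_empty, hIsing, hpd]
      rfl
    · have hmin' : (I.erase p).min' hEne = m := by
        apply le_antisymm
        · apply Finset.min'_le
          apply Finset.mem_erase.mpr
          refine ⟨?_, hmI⟩
          -- m ≠ p, else I.erase p would be empty
          intro hmp
          obtain ⟨y, hy⟩ := hEne
          have := herase_mem y hy
          omega
        · apply Finset.le_min'
          intro y hy
          exact hlb y (Finset.mem_erase.mp hy).2
      have : pp d l (I.erase p) = p := by
        rw [pp_of_nonempty d l hEne, hmin', hpval]
      rw [this, Finset.insert_erase hpI]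
  · have hgg : gg d l I = I := by rw [gg, ← hp, if_neg hpI]
    have hmem : ∀ x ∈ I, 1 ≤ x ∧ x ≤ d - 1 ∧ m ≤ x ∧ x ≤ p - 1 := by
      intro x hx
      have hxd := hIsub hx; rw [Finset.mem_Icc] at hxd
      have h1 := hub x hx
      have h3 : x < p := lt_of_le_of_ne h1 (fun h => hpI (h ▸ hx))
      have h4 : p ≤ d := by rw [hpval]; exact min_le_right _ _
      exact ⟨hxd.1, by omega, hlb x hx, by omega⟩
    rw [hgg]
    constructor
    · constructor
      · intro x hx
        rw [Finset.mem_Icc]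
        have := hmem x hx
        omega
      · intro a ha b hb hab
        have h1 := hmem a (Finset.mem_coe.mp ha)
        have h2 := hmem b (Finset.mem_coe.mp hb)
        have : p ≤ m + l := by rw [hpval]; exact min_le_left _ _
        omega
    · rw [ff, if_pos hIodd]

lemma gg_ff (d l : ℕ) (hl : 0 < l) (hld : l < d) {C : Finset ℕ}
    (hC : IsClq d l C) : gg d l (ff d l C) = C := by
  by_cases hodd : Odd C.card
  · have hne : C.Nonempty := Finset.card_pos.mp (by rcases hodd with ⟨k, hk⟩; omega)
    have hppC : pp d l C ∉ C := fun hx => absurd (mem_lt_pp d l hl hC hx) (by simp)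
    rw [ff, if_pos hodd, gg, if_neg hppC]
  · rw [ff, if_neg hodd]
    rcases C.eq_empty_or_nonempty with hE | hne
    · subst hE
      rw [pp_of_empty]
      have h1 : pp d l ({d} : Finset ℕ) = d := by
        rw [pp_of_nonempty d l (Finset.singleton_nonempty d)]
        simp
      rw [show insert d (∅ : Finset ℕ) = {d} from rfl, gg, h1, if_pos (Finset.mem_singleton_self d)]
      exact Finset.erase_singleton d
    · set m := C.min' hne with hm
      have hppC : pp d l C ∉ C := fun hx => absurd (mem_lt_pp d l hl hC hx) (by simp)
      have hmin' : (insert (pp d l C) C).min' (Finset.insert_nonempty _ _) = m := by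
        apply le_antisymm
        · exact Finset.min'_le _ _ (Finset.mem_insert_of_mem (C.min'_mem hne))
        · apply Finset.le_min'
          intro y hy
          rcases Finset.mem_insert.mp hy with h | h
          · subst h
            rw [pp_of_nonempty d l hne, ← hm]
            have hmd := hC.1 (C.min'_mem hne); rw [Finset.mem_Icc] at hmd
            have : m ≤ d := by omega
            exact le_min (by omega) this
          · exact Finset.min'_le _ _ h
      have hppI : pp d l (insert (pp d l C) C) = pp d l C := by
        rw [pp_of_nonempty d l (Finset.insert_nonempty _ _), hmin',
          pp_of_nonempty d l hne, ← hm]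
      rw [gg, hppI, if_pos (Finset.mem_insert_self _ _), Finset.erase_insert hppC]

end OddSpreadAux

/-- The number of subsets `I ⊆ {1, …, d}` with `|I|` odd and `max I - min I ≤ l` equals the
number of (possibly empty) cliques of the graph on vertex set `{1, …, d-1}` where distinct
`i`, `j` are adjacent whenever `|i - j| ≤ l - 1` (here `0 < l < d`). -/
theorem odd_small_spread_subsets_eq_cliques (d l : ℕ) (hl : 0 < l) (hld : l < d) :
    {I : Finset ℕ | I ⊆ Finset.Icc 1 d ∧ Odd I.card ∧
        ∀ h : I.Nonempty, I.max' h - I.min' h ≤ l}.ncard =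
      {C : Finset ℕ | C ⊆ Finset.Icc 1 (d - 1) ∧
        (C : Set ℕ).Pairwise fun a b => ((a : ℤ) - (b : ℤ)).natAbs ≤ l - 1}.ncard := by
  have hS : {I : Finset ℕ | I ⊆ Finset.Icc 1 d ∧ Odd I.card ∧
        ∀ h : I.Nonempty, I.max' h - I.min' h ≤ l} = OddSpreadAux.IsOddS d l := rfl
  have hT : {C : Finset ℕ | C ⊆ Finset.Icc 1 (d - 1) ∧
        (C : Set ℕ).Pairwise fun a b => ((a : ℤ) - (b : ℤ)).natAbs ≤ l - 1} = OddSpreadAux.IsClq d l := rfl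
  rw [hS, hT]
  have himg : (OddSpreadAux.IsOddS d l : Set (Finset ℕ)) = OddSpreadAux.ff d l '' (OddSpreadAux.IsClq d l) := by
    ext I
    constructor
    · intro hI
      obtain ⟨h1, h2⟩ := OddSpreadAux.gg_clq_and_ff_gg d l hl hld hI
      exact ⟨OddSpreadAux.gg d l I, h1, h2⟩
    · rintro ⟨C, hC, rfl⟩
      exact OddSpreadAux.ff_mem d l hl hld hC
  have hinj : Set.InjOn (OddSpreadAux.ff d l) (OddSpreadAux.IsClq d l) := by
    intro a ha b hb hab
    have h1 := OddSpreadAux.gg_ff d l hl hld ha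
    have h2 := OddSpreadAux.gg_ff d l hl hld hb
    rw [← h1, ← h2, hab]
  rw [himg, Set.ncard_image_of_injOn hinj]
end

section
/- Let M be a matroid on a finite ground set E with |E| = d and rank r, and suppose that the symmetric difference of any finite family of circuits of M can be written as a union of pairwise disjoint circuits (possibly empty). Call a subset C ⊆ E a cycle of M if C is empty or C is a union of pairwise disjoint circuits of M. Then M has exactly 2^{d−r} cycles. -/
/-- A circuit of a matroid: a minimal dependent subset of the ground set. -/
def Matroid.IsCircuit' {α : Type*} (M : Matroid α) (C : Set α) : Prop :=
  C ⊆ M.E ∧ ¬ M.Indep C ∧ ∀ D ⊂ C, M.Indep D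

/-- A cycle of a matroid: the empty set or a union of pairwise disjoint circuits. -/
def Matroid.IsCycle' {α : Type*} (M : Matroid α) (C : Set α) : Prop :=
  ∃ 𝒟 : Set (Set α), (∀ D ∈ 𝒟, M.IsCircuit' D) ∧ 𝒟.Pairwise Disjoint ∧ C = ⋃₀ 𝒟

section Aux

variable {α : Type*} {M : Matroid α}

lemma isCycle'_subset_ground {C : Set α} (h : M.IsCycle' C) : C ⊆ M.E := by
  obtain ⟨𝒟, h𝒟, -, rfl⟩ := h
  exact Set.sUnion_subset fun D hD => (h𝒟 D hD).1

/-- uniqueness of the member containing a point, within a pairwise disjoint family -/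
lemma unique_mem_of_pairwiseDisjoint {𝒟 : Set (Set α)} (hP : 𝒟.Pairwise Disjoint)
    {D D' : Set α} {x : α} (hD : D ∈ 𝒟) (hD' : D' ∈ 𝒟) (hx : x ∈ D) (hx' : x ∈ D') :
    D = D' := by
  by_contra h
  exact Set.disjoint_left.mp (hP hD hD' h) hx hx'

/-- Symmetric difference of two cycles is a cycle. -/
lemma cycle_symmDiff (hfin : M.E.Finite)
    (hsym : ∀ F : Finset (Set α), (∀ C ∈ F, M.IsCircuit' C) →
      M.IsCycle' {x | Odd {C : Set α | C ∈ F ∧ x ∈ C}.ncard})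
    {C₁ C₂ : Set α} (h₁ : M.IsCycle' C₁) (h₂ : M.IsCycle' C₂) :
    M.IsCycle' ((C₁ \ C₂) ∪ (C₂ \ C₁)) := by
  classical
  obtain ⟨𝒟₁, hc₁, hP₁, rfl⟩ := h₁
  obtain ⟨𝒟₂, hc₂, hP₂, rfl⟩ := h₂
  have hfin₁ : 𝒟₁.Finite := hfin.finite_subsets.subset fun D hD => (hc₁ D hD).1
  have hfin₂ : 𝒟₂.Finite := hfin.finite_subsets.subset fun D hD => (hc₂ D hD).1
  set F : Finset (Set α) := (hfin₁.toFinset ∪ hfin₂.toFinset) \ (hfin₁.toFinset ∩ hfin₂.toFinset)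
    with hF
  have hmemF : ∀ C : Set α, C ∈ F ↔ (C ∈ 𝒟₁ ∧ C ∉ 𝒟₂) ∨ (C ∈ 𝒟₂ ∧ C ∉ 𝒟₁) := by
    intro C
    simp only [hF, Finset.mem_sdiff, Finset.mem_union, Finset.mem_inter,
      Set.Finite.mem_toFinset]
    tauto
  have hcirc : ∀ C ∈ F, M.IsCircuit' C := by
    intro C hC
    rcases (hmemF C).mp hC with ⟨h, -⟩ | ⟨h, -⟩
    · exact hc₁ C h
    · exact hc₂ C h
  have hset : {x | Odd {C : Set α | C ∈ F ∧ x ∈ C}.ncard}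
      = (⋃₀ 𝒟₁ \ ⋃₀ 𝒟₂) ∪ (⋃₀ 𝒟₂ \ ⋃₀ 𝒟₁) := by
    ext x
    simp only [Set.mem_setOf_eq, Set.mem_union, Set.mem_diff]
    by_cases hx₁ : x ∈ ⋃₀ 𝒟₁ <;> by_cases hx₂ : x ∈ ⋃₀ 𝒟₂
    · -- x in both : even
      obtain ⟨D₁, hD₁, hxD₁⟩ := hx₁
      obtain ⟨D₂, hD₂, hxD₂⟩ := hx₂
      have hx₁' : x ∈ ⋃₀ 𝒟₁ := ⟨D₁, hD₁, hxD₁⟩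
      have hx₂' : x ∈ ⋃₀ 𝒟₂ := ⟨D₂, hD₂, hxD₂⟩
      constructor
      · intro hodd
        exfalso
        by_cases hDD : D₁ = D₂
        · have hemp : {C : Set α | C ∈ F ∧ x ∈ C} = ∅ := by
            ext C
            simp only [Set.mem_setOf_eq, Set.mem_empty_iff_false, iff_false, not_and]
            intro hCF hxC
            rcases (hmemF C).mp hCF with ⟨h, h'⟩ | ⟨h, h'⟩
            · have hC1 : C = D₁ := unique_mem_of_pairwiseDisjoint hP₁ h hD₁ hxC hxD₁
              exact h' (by rw [hC1, hDD]; exact hD₂)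
            · have hC2 : C = D₂ := unique_mem_of_pairwiseDisjoint hP₂ h hD₂ hxC hxD₂
              exact h' (by rw [hC2, ← hDD]; exact hD₁)
          rw [hemp] at hodd
          simp at hodd
        · have hD₁n₂ : D₁ ∉ 𝒟₂ := fun h =>
            hDD (unique_mem_of_pairwiseDisjoint hP₂ h hD₂ hxD₁ hxD₂)
          have hD₂n₁ : D₂ ∉ 𝒟₁ := fun h =>
            hDD (unique_mem_of_pairwiseDisjoint hP₁ hD₁ h hxD₁ hxD₂)
          have hpair : {C : Set α | C ∈ F ∧ x ∈ C} = {D₁, D₂} := by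
            ext C
            simp only [Set.mem_setOf_eq, Set.mem_insert_iff, Set.mem_singleton_iff]
            constructor
            · rintro ⟨hCF, hxC⟩
              rcases (hmemF C).mp hCF with ⟨h, -⟩ | ⟨h, -⟩
              · exact Or.inl (unique_mem_of_pairwiseDisjoint hP₁ h hD₁ hxC hxD₁)
              · exact Or.inr (unique_mem_of_pairwiseDisjoint hP₂ h hD₂ hxC hxD₂)
            · rintro (h | h) <;> rw [h]
              · exact ⟨(hmemF D₁).mpr (Or.inl ⟨hD₁, hD₁n₂⟩), hxD₁⟩
              · exact ⟨(hmemF D₂).mpr (Or.inr ⟨hD₂, hD₂n₁⟩), hxD₂⟩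
          rw [hpair, Set.ncard_pair hDD] at hodd
          simp [Nat.odd_iff] at hodd
      · rintro (⟨-, h⟩ | ⟨-, h⟩)
        · exact absurd hx₂' h
        · exact absurd hx₁' h
    · -- x in C₁ only : odd
      obtain ⟨D₁, hD₁, hxD₁⟩ := hx₁
      have hx₁' : x ∈ ⋃₀ 𝒟₁ := ⟨D₁, hD₁, hxD₁⟩
      have hD₁n₂ : D₁ ∉ 𝒟₂ := fun h => hx₂ ⟨D₁, h, hxD₁⟩
      have hone : {C : Set α | C ∈ F ∧ x ∈ C} = {D₁} := by
        ext C
        simp only [Set.mem_setOf_eq, Set.mem_singleton_iff]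
        constructor
        · rintro ⟨hCF, hxC⟩
          rcases (hmemF C).mp hCF with ⟨h, -⟩ | ⟨h, -⟩
          · exact unique_mem_of_pairwiseDisjoint hP₁ h hD₁ hxC hxD₁
          · exact absurd ⟨C, h, hxC⟩ hx₂
        · intro h
          rw [h]
          exact ⟨(hmemF D₁).mpr (Or.inl ⟨hD₁, hD₁n₂⟩), hxD₁⟩
      rw [hone, Set.ncard_singleton]
      simp only [odd_one, true_iff]
      exact Or.inl ⟨hx₁', hx₂⟩
    · -- x in C₂ only : odd
      obtain ⟨D₂, hD₂, hxD₂⟩ := hx₂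
      have hx₂' : x ∈ ⋃₀ 𝒟₂ := ⟨D₂, hD₂, hxD₂⟩
      have hD₂n₁ : D₂ ∉ 𝒟₁ := fun h => hx₁ ⟨D₂, h, hxD₂⟩
      have hone : {C : Set α | C ∈ F ∧ x ∈ C} = {D₂} := by
        ext C
        simp only [Set.mem_setOf_eq, Set.mem_singleton_iff]
        constructor
        · rintro ⟨hCF, hxC⟩
          rcases (hmemF C).mp hCF with ⟨h, -⟩ | ⟨h, -⟩
          · exact absurd ⟨C, h, hxC⟩ hx₁
          · exact unique_mem_of_pairwiseDisjoint hP₂ h hD₂ hxC hxD₂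
        · intro h
          rw [h]
          exact ⟨(hmemF D₂).mpr (Or.inr ⟨hD₂, hD₂n₁⟩), hxD₂⟩
      rw [hone, Set.ncard_singleton]
      simp only [odd_one, true_iff]
      exact Or.inr ⟨hx₂', hx₁⟩
    · -- x in neither : empty
      have hemp : {C : Set α | C ∈ F ∧ x ∈ C} = ∅ := by
        ext C
        simp only [Set.mem_setOf_eq, Set.mem_empty_iff_false, iff_false, not_and]
        intro hCF hxC
        rcases (hmemF C).mp hCF with ⟨h, -⟩ | ⟨h, -⟩
        · exact hx₁ ⟨C, h, hxC⟩
        · exact hx₂ ⟨C, h, hxC⟩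
      rw [hemp]
      simp [hx₁, hx₂]
  rw [← hset]
  exact hsym F hcirc

/-- A cycle contained in an independent set is empty. -/
lemma cycle_subset_indep_eq_empty {C I : Set α} (hI : M.Indep I) (hC : M.IsCycle' C)
    (hCI : C ⊆ I) : C = ∅ := by
  obtain ⟨𝒟, h𝒟, -, rfl⟩ := hC
  have h𝒟e : 𝒟 = ∅ := by
    ext D
    simp only [Set.mem_empty_iff_false, iff_false]
    intro hD
    exact (h𝒟 D hD).2.1 (hI.subset ((Set.subset_sUnion_of_mem hD).trans hCI))
  simp [h𝒟e]

/-- Fundamental circuit: for `e ∈ M.E \ B` with `B` a base, there is a circuit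
containing `e` inside `insert e B`. -/
lemma exists_fund_circuit (hfin : M.E.Finite) {B : Set α} {e : α} (hB : M.IsBase B)
    (he : e ∈ M.E \ B) : ∃ C, M.IsCircuit' C ∧ e ∈ C ∧ C ⊆ insert e B := by
  have hins : insert e B ⊆ M.E := Set.insert_subset he.1 hB.subset_ground
  have hdep : ¬ M.Indep (insert e B) := by
    intro h
    exact he.2 ((hB.eq_of_subset_indep h (Set.subset_insert _ _)) ▸ Set.mem_insert _ _)
  set T : Set (Set α) := {D | D ⊆ insert e B ∧ ¬ M.Indep D} with hT
  have hTfin : T.Finite :=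
    ((hfin.subset hins).finite_subsets).subset fun D hD => hD.1
  obtain ⟨C, hCT, hmin⟩ := Set.Finite.exists_minimal hTfin ⟨insert e B, le_refl _, hdep⟩
  have hcirc : M.IsCircuit' C := by
    refine ⟨hCT.1.trans hins, hCT.2, fun D hD => ?_⟩
    by_contra hDind
    exact hD.2 (hmin ⟨hD.subset.trans hCT.1, hDind⟩ hD.subset)
  refine ⟨C, hcirc, ?_, hCT.1⟩
  by_contra heC
  have hCB : C ⊆ B := fun x hx => ((hCT.1 hx).elim (fun h => absurd (h ▸ hx) heC) id)
  exact hCT.2 (hB.indep.subset hCB)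

end Aux

/-- Let `M` be a matroid on a finite ground set of cardinality `d`, whose bases all have
cardinality `r`, and suppose the symmetric difference of any finite family of circuits is
a union of pairwise disjoint circuits. Then `M` has exactly `2 ^ (d - r)` cycles. -/
theorem matroid_card_cycles {α : Type*} (M : Matroid α) (d r : ℕ)
    (hfin : M.E.Finite) (hd : M.E.ncard = d)
    (hr : ∀ B, M.IsBase B → B.ncard = r)
    (hsym : ∀ F : Finset (Set α), (∀ C ∈ F, M.IsCircuit' C) →
      M.IsCycle' {x | Odd {C : Set α | C ∈ F ∧ x ∈ C}.ncard}) :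
    {C : Set α | M.IsCycle' C}.ncard = 2 ^ (d - r) := by
  classical
  obtain ⟨B, hB⟩ := M.exists_isBase
  have hBE : B ⊆ M.E := hB.subset_ground
  set T : Set α := M.E \ B with hTdef
  have hTfin : T.Finite := hfin.diff
  -- the map C ↦ C \ B is a bijection from cycles to subsets of T
  have hinj : Set.InjOn (fun C => C \ B) {C | M.IsCycle' C} := by
    intro C₁ hC₁ C₂ hC₂ heq
    simp only [Set.mem_setOf_eq] at hC₁ hC₂
    have heq' : C₁ \ B = C₂ \ B := heq
    have hK : M.IsCycle' ((C₁ \ C₂) ∪ (C₂ \ C₁)) := cycle_symmDiff hfin hsym hC₁ hC₂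
    have hKB : (C₁ \ C₂) ∪ (C₂ \ C₁) ⊆ B := by
      rintro x (⟨hx₁, hx₂⟩ | ⟨hx₂, hx₁⟩) <;> by_contra hxB
      · have : x ∈ C₂ \ B := by rw [← heq']; exact ⟨hx₁, hxB⟩
        exact hx₂ this.1
      · have : x ∈ C₁ \ B := by rw [heq']; exact ⟨hx₂, hxB⟩
        exact hx₁ this.1
    have hKe : (C₁ \ C₂) ∪ (C₂ \ C₁) = ∅ :=
      cycle_subset_indep_eq_empty hB.indep hK hKB
    ext x
    constructor <;> intro hx <;> by_contra hx'
    · exact absurd (hKe ▸ Or.inl ⟨hx, hx'⟩) (Set.notMem_empty x)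
    · exact absurd (hKe ▸ Or.inr ⟨hx, hx'⟩) (Set.notMem_empty x)
  have hmaps : Set.MapsTo (fun C => C \ B) {C | M.IsCycle' C} {S | S ⊆ T} := by
    intro C hC
    exact Set.diff_subset_diff_left (isCycle'_subset_ground hC)
  have hsurj : Set.SurjOn (fun C => C \ B) {C | M.IsCycle' C} {S | S ⊆ T} := by
    intro S hS
    simp only [Set.mem_setOf_eq] at hS
    have hSE : S ⊆ M.E := hS.trans Set.diff_subset
    have hSfin : S.Finite := hfin.subset hSE
    have hc : ∀ e : α, ∃ C : Set α, e ∈ S →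
        M.IsCircuit' C ∧ e ∈ C ∧ C ⊆ insert e B := by
      intro e
      by_cases he : e ∈ S
      · obtain ⟨C, h1, h2, h3⟩ := exists_fund_circuit hfin hB (hS he)
        exact ⟨C, fun _ => ⟨h1, h2, h3⟩⟩
      · exact ⟨∅, fun h => absurd h he⟩
    choose f hf using hc
    set F : Finset (Set α) := hSfin.toFinset.image f with hF
    have hcirc : ∀ C ∈ F, M.IsCircuit' C := by
      intro C hC
      simp only [hF, Finset.mem_image, Set.Finite.mem_toFinset] at hC
      obtain ⟨e, he, rfl⟩ := hC
      exact (hf e he).1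
    have hK := hsym F hcirc
    refine ⟨_, hK, ?_⟩
    ext x
    simp only [Set.mem_image, Set.mem_diff, Set.mem_setOf_eq]
    constructor
    · rintro ⟨hodd, hxB⟩
      by_contra hxS
      have hemp : {C : Set α | C ∈ F ∧ x ∈ C} = ∅ := by
        ext C
        simp only [Set.mem_setOf_eq, Set.mem_empty_iff_false, iff_false, not_and]
        intro hCF hxC
        simp only [hF, Finset.mem_image, Set.Finite.mem_toFinset] at hCF
        obtain ⟨e, he, rfl⟩ := hCF
        rcases (hf e he).2.2 hxC with h | hmem
        · exact hxS (h ▸ he)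
        · exact hxB hmem
      rw [hemp] at hodd
      simp at hodd
    · intro hxS
      have hxB : x ∉ B := (hS hxS).2
      refine ⟨?_, hxB⟩
      have hone : {C : Set α | C ∈ F ∧ x ∈ C} = {f x} := by
        ext C
        simp only [Set.mem_setOf_eq, Set.mem_singleton_iff]
        constructor
        · rintro ⟨hCF, hxC⟩
          simp only [hF, Finset.mem_image, Set.Finite.mem_toFinset] at hCF
          obtain ⟨e, he, rfl⟩ := hCF
          rcases (hf e he).2.2 hxC with h | hmem
          · rw [h]
          · exact absurd hmem hxB
        · intro h
          rw [h]
          refine ⟨?_, (hf x hxS).2.1⟩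
          simp only [hF, Finset.mem_image, Set.Finite.mem_toFinset]
          exact ⟨x, hxS, rfl⟩
      rw [hone, Set.ncard_singleton]
      exact odd_one
  have himage : (fun C => C \ B) '' {C | M.IsCycle' C} = {S | S ⊆ T} :=
    Set.Subset.antisymm (Set.mapsTo_iff_image_subset.mp hmaps) hsurj
  have hcard1 : {C : Set α | M.IsCycle' C}.ncard = {S : Set α | S ⊆ T}.ncard := by
    rw [← himage, Set.ncard_image_of_injOn hinj]
  have hTcard : T.ncard = d - r := by
    rw [hTdef, Set.ncard_diff hBE (hfin.subset hBE), hd, hr B hB]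
  have hpow : {S : Set α | S ⊆ T}.ncard = 2 ^ T.ncard := by
    have heq : {S : Set α | S ⊆ T}
        = (fun t : Finset α => (t : Set α)) '' ↑hTfin.toFinset.powerset := by
      ext S
      simp only [Set.mem_setOf_eq, Set.mem_image, Finset.mem_coe, Finset.mem_powerset]
      constructor
      · intro hS
        refine ⟨(hTfin.subset hS).toFinset, ?_, by simp⟩
        intro x hx
        simp only [Set.Finite.mem_toFinset] at hx ⊢
        exact hS hx
      · rintro ⟨t, ht, rfl⟩
        intro x hx
        have := ht hx
        simpa using this
    rw [heq, Set.ncard_image_of_injOn (Finset.coe_injective.injOn),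
      Set.ncard_coe_finset, Finset.card_powerset, Set.ncard_eq_toFinset_card _ hTfin]
  rw [hcard1, hpow, hTcard]
end

section
/- Let M be an m × n matrix with entries in {0,1} (viewed as a real matrix) of rank d, having no two equal rows and no two equal columns, and suppose M contains the d × d identity matrix as a submatrix (i.e., there exist d rows and d columns of M whose corresponding submatrix is the identity). Then m·n ≤ (d + 1)·2^d. -/
open Finset Matrix

lemma close_family_card_le {α : Type*} [DecidableEq α] (U : Finset α) (F : Finset (Finset α))
    (hsub : ∀ A ∈ F, A ⊆ U)
    (hpair : ∀ A ∈ F, ∀ B ∈ F, (A \ B).card ≤ 1) :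
    F.card ≤ U.card + 1 := by
  rcases F.eq_empty_or_nonempty with rfl | hne
  · simp
  obtain ⟨A0, hA0, hmin⟩ := F.exists_min_image Finset.card hne
  have hy : ∀ A ∈ F, A ≠ A0 → ∃ y, A \ A0 = {y} := by
    intro A hA hAne
    have h1 : (A \ A0).card ≤ 1 := hpair A hA A0 hA0
    have hne' : (A \ A0).Nonempty := by
      rw [Finset.sdiff_nonempty]
      intro hsubA
      exact hAne (Finset.eq_of_subset_of_card_le hsubA (hmin A hA))
    exact Finset.card_eq_one.mp (le_antisymm h1 (Finset.card_pos.mpr hne'))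
  have hmemy : ∀ (A : Finset α) (y : α), A \ A0 = {y} → y ∈ A ∧ y ∉ A0 := by
    intro A y h
    have := h ▸ Finset.mem_singleton_self y
    exact ⟨(Finset.mem_sdiff.mp this).1, (Finset.mem_sdiff.mp this).2⟩
  -- reconstruction: A = (A0 ∪ {y}) \ (A0 \ A)
  have hrec : ∀ (A : Finset α) (y : α), A \ A0 = {y} → A = (A0 ∪ {y}) \ (A0 \ A) := by
    intro A y hyA
    ext x
    simp only [Finset.mem_sdiff, Finset.mem_union, Finset.mem_singleton]
    constructor
    · intro hx
      refine ⟨?_, fun h => h.2 hx⟩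
      by_cases hx0 : x ∈ A0
      · exact Or.inl hx0
      · right
        have : x ∈ A \ A0 := Finset.mem_sdiff.mpr ⟨hx, hx0⟩
        rwa [hyA, Finset.mem_singleton] at this
    · rintro ⟨h1 | h1, h2⟩
      · by_contra hxA; exact h2 ⟨h1, hxA⟩
      · subst h1
        have : x ∈ A \ A0 := hyA ▸ Finset.mem_singleton_self x
        exact (Finset.mem_sdiff.mp this).1
  -- two members with different "new" elements have the same difference from A0
  have hkey : ∀ A ∈ F, ∀ B ∈ F, ∀ yA yB, A \ A0 = {yA} → B \ A0 = {yB} → yA ≠ yB →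
      A0 \ B ⊆ A0 \ A := by
    intro A hA B hB yA yB hyA hyB hne' x hx
    obtain ⟨hx0, hxB⟩ := Finset.mem_sdiff.mp hx
    refine Finset.mem_sdiff.mpr ⟨hx0, fun hxA => ?_⟩
    obtain ⟨hyAA, hyA0⟩ := hmemy A yA hyA
    have hyAB : yA ∉ B := by
      intro hmem
      have : yA ∈ B \ A0 := Finset.mem_sdiff.mpr ⟨hmem, hyA0⟩
      rw [hyB, Finset.mem_singleton] at this
      exact hne' this
    have hsubset : ({x, yA} : Finset α) ⊆ A \ B := by
      intro z hz
      rcases Finset.mem_insert.mp hz with rfl | hz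
      · exact Finset.mem_sdiff.mpr ⟨hxA, hxB⟩
      · rw [Finset.mem_singleton] at hz; subst hz
        exact Finset.mem_sdiff.mpr ⟨hyAA, hyAB⟩
    have h2 : 2 ≤ (A \ B).card := by
      have := Finset.card_le_card hsubset
      rwa [Finset.card_pair (fun h => hyA0 (by rw [← h]; exact hx0))] at this
    have := hpair A hA B hB
    omega
  have hFcard : F.card = (F.erase A0).card + 1 := (Finset.card_erase_add_one hA0).symm
  by_cases hcase : ∀ A ∈ F.erase A0, ∀ B ∈ F.erase A0, ∀ yA yB,
      A \ A0 = {yA} → B \ A0 = {yB} → yA = yB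
  · -- all new elements are equal
    rcases (F.erase A0).eq_empty_or_nonempty with hF' | ⟨A1, hA1⟩
    · rw [hFcard, hF']; simp
    obtain ⟨y0, hy0⟩ := hy A1 (Finset.mem_of_mem_erase hA1) (Finset.ne_of_mem_erase hA1)
    obtain ⟨hy0A1, hy0A0⟩ := hmemy A1 y0 hy0
    have hcard' : (F.erase A0).card ≤ A0.card + 1 := by
      have := Finset.card_le_card_of_injOn (s := F.erase A0) (f := fun A => A0 \ A)
        (t := insert ∅ (A0.image fun x => ({x} : Finset α)))
        (fun A hA => by
          dsimp only
          have h1 : (A0 \ A).card ≤ 1 := hpair A0 hA0 A (Finset.mem_of_mem_erase hA)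
          interval_cases h : (A0 \ A).card
          · simp [Finset.card_eq_zero.mp h]
          · obtain ⟨x, hx⟩ := Finset.card_eq_one.mp h
            have hxA0 : x ∈ A0 := by
              have := hx ▸ Finset.mem_singleton_self x
              exact (Finset.mem_sdiff.mp this).1
            exact Finset.mem_insert.mpr (Or.inr (Finset.mem_image.mpr ⟨x, hxA0, hx.symm⟩)))
        (fun A hA B hB hAB => by
          dsimp only at hAB
          obtain ⟨yA, hyA⟩ := hy A (Finset.mem_of_mem_erase hA) (Finset.ne_of_mem_erase hA)
          obtain ⟨yB, hyB⟩ := hy B (Finset.mem_of_mem_erase hB) (Finset.ne_of_mem_erase hB)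
          have hyy : yA = yB := hcase A hA B hB yA yB hyA hyB
          rw [hrec A yA hyA, hrec B yB hyB, ← hyy, hAB])
      calc (F.erase A0).card ≤ (insert ∅ (A0.image fun x => ({x} : Finset α))).card := this
        _ ≤ (A0.image fun x => ({x} : Finset α)).card + 1 := Finset.card_insert_le _ _
        _ ≤ A0.card + 1 := by have := Finset.card_image_le (s := A0)
                                (f := fun x => ({x} : Finset α)); omega
    have hA0U : A0 ⊂ U := by
      refine Finset.ssubset_iff_of_subset (hsub A0 hA0) |>.mpr
        ⟨y0, hsub A1 (Finset.mem_of_mem_erase hA1) hy0A1, hy0A0⟩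
    have := Finset.card_lt_card hA0U
    omega
  · -- two distinct new elements exist
    push_neg at hcase
    obtain ⟨A1, hA1, B1, hB1, y1, y2, hy1, hy2, hy12⟩ := hcase
    have hinj : (F.erase A0).card ≤ U.card := by
      refine Finset.card_le_card_of_injOn (f := fun A => A \ A0) (t := U.powersetCard 1)
        (fun A hA => by
          dsimp only
          obtain ⟨yA, hyA⟩ := hy A (Finset.mem_of_mem_erase hA) (Finset.ne_of_mem_erase hA)
          rw [hyA, Finset.mem_coe, Finset.mem_powersetCard]
          exact ⟨Finset.singleton_subset_iff.mpr
            (hsub A (Finset.mem_of_mem_erase hA) (hmemy A yA hyA).1), Finset.card_singleton _⟩)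
        (fun A hA B hB hAB => ?_) |>.trans ?_
      · dsimp only at hAB
        obtain ⟨yA, hyA⟩ := hy A (Finset.mem_of_mem_erase hA) (Finset.ne_of_mem_erase hA)
        obtain ⟨yB, hyB⟩ := hy B (Finset.mem_of_mem_erase hB) (Finset.ne_of_mem_erase hB)
        have hyy : yA = yB := by
          exact Finset.singleton_injective (by rw [← hyA, ← hyB, hAB])
        -- find C among A1, B1 with different new element
        have hC : ∃ C ∈ F.erase A0, ∃ yC, C \ A0 = {yC} ∧ yC ≠ yA := by
          by_cases h : y1 = yA
          · exact ⟨B1, hB1, y2, hy2, fun e => hy12 (h.trans e.symm)⟩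
          · exact ⟨A1, hA1, y1, hy1, h⟩
        obtain ⟨C, hC', yC, hyC, hyCne⟩ := hC
        have e1 : A0 \ A = A0 \ C := by
          apply Finset.Subset.antisymm
          · exact hkey C (Finset.mem_of_mem_erase hC') A (Finset.mem_of_mem_erase hA)
              yC yA hyC hyA hyCne
          · exact hkey A (Finset.mem_of_mem_erase hA) C (Finset.mem_of_mem_erase hC')
              yA yC hyA hyC (Ne.symm hyCne)
        have e2 : A0 \ B = A0 \ C := by
          apply Finset.Subset.antisymm
          · exact hkey C (Finset.mem_of_mem_erase hC') B (Finset.mem_of_mem_erase hB)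
              yC yB hyC hyB (hyy ▸ hyCne)
          · exact hkey B (Finset.mem_of_mem_erase hB) C (Finset.mem_of_mem_erase hC')
              yB yC hyB hyC (Ne.symm (hyy ▸ hyCne))
        rw [hrec A yA hyA, hrec B yB hyB, ← hyy, e1, e2]
      · rw [Finset.card_powersetCard, Nat.choose_one_right]
    omega

/-- Let `M` be an `m × n` 0/1 matrix of real rank `d`, with pairwise distinct rows, pairwise
distinct columns, containing a `d × d` identity submatrix. Then `m * n ≤ (d + 1) * 2 ^ d`. -/
theorem zero_one_matrix_with_identity_size_le (m n d : ℕ) (M : Matrix (Fin m) (Fin n) ℝ)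
    (h01 : ∀ i j, M i j = 0 ∨ M i j = 1)
    (hrank : M.rank = d)
    (hrows : Function.Injective fun i => M i)
    (hcols : Function.Injective fun j i => M i j)
    (hid : ∃ (ρ : Fin d → Fin m) (γ : Fin d → Fin n),
      Function.Injective ρ ∧ Function.Injective γ ∧
      ∀ i j, M (ρ i) (γ j) = if i = j then 1 else 0) :
    m * n ≤ (d + 1) * 2 ^ d := by
  classical
  obtain ⟨ρ, γ, hρ, hγ, hId⟩ := hid
  -- every entry is determined by the identity submatrix rows/columns
  have key : ∀ i j, M i j = ∑ k, M (ρ k) j * M i (γ k) := by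
    have hind : LinearIndependent ℝ (fun k : Fin d => Mᵀ (γ k)) := by
      rw [Fintype.linearIndependent_iff]
      intro g hg k
      have := congrFun hg (ρ k)
      simp only [Finset.sum_apply, Pi.smul_apply, Matrix.transpose_apply, smul_eq_mul,
        Pi.zero_apply, hId] at this
      simpa [Finset.sum_ite_eq] using this
    have hfin : Module.finrank ℝ (Submodule.span ℝ (Set.range Mᵀ)) = d := by
      rw [← hrank, Matrix.rank_eq_finrank_span_cols]; rfl
    have hle : Submodule.span ℝ (Set.range fun k => Mᵀ (γ k)) ≤
        Submodule.span ℝ (Set.range Mᵀ) :=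
      Submodule.span_mono (Set.range_comp_subset_range γ Mᵀ)
    have hspan : Submodule.span ℝ (Set.range fun k => Mᵀ (γ k)) =
        Submodule.span ℝ (Set.range Mᵀ) := by
      apply Submodule.eq_of_le_of_finrank_le hle
      rw [hfin, finrank_span_eq_card hind, Fintype.card_fin]
    intro i j
    have hmem : Mᵀ j ∈ Submodule.span ℝ (Set.range fun k => Mᵀ (γ k)) := by
      rw [hspan]; exact Submodule.subset_span (Set.mem_range_self j)
    obtain ⟨a, ha⟩ := (Submodule.mem_span_range_iff_exists_fun ℝ).mp hmem
    have hcoef : ∀ i', a i' = M (ρ i') j := by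
      intro i'
      have := congrFun ha (ρ i')
      simp only [Finset.sum_apply, Pi.smul_apply, Matrix.transpose_apply, smul_eq_mul,
        hId] at this
      rw [← this]
      simp [Finset.sum_ite_eq]
    have := congrFun ha i
    simp only [Finset.sum_apply, Pi.smul_apply, Matrix.transpose_apply, smul_eq_mul] at this
    rw [← this]
    exact Finset.sum_congr rfl fun k _ => by rw [hcoef k]
  -- encode rows and columns as subsets of `Fin d`
  set T : Fin m → Finset (Fin d) := fun i => univ.filter (fun k => M i (γ k) = 1) with hT
  set S : Fin n → Finset (Fin d) := fun j => univ.filter (fun k => M (ρ k) j = 1) with hS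
  have eT : ∀ i k, M i (γ k) = if k ∈ T i then 1 else 0 := by
    intro i k
    by_cases hk : M i (γ k) = 1
    · simp [hT, hk]
    · rcases h01 i (γ k) with h | h
      · simp [hT, hk, h]
      · exact absurd h hk
  have eS : ∀ j k, M (ρ k) j = if k ∈ S j then 1 else 0 := by
    intro j k
    by_cases hk : M (ρ k) j = 1
    · simp [hS, hk]
    · rcases h01 (ρ k) j with h | h
      · simp [hS, hk, h]
      · exact absurd h hk
  have hcardR : ∀ i j, ((T i ∩ S j).card : ℝ) = M i j := by
    intro i j
    rw [key i j]
    have h1 : ∀ k, M (ρ k) j * M i (γ k) = if k ∈ T i ∩ S j then (1 : ℝ) else 0 := by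
      intro k; rw [eT, eS]
      by_cases h1 : k ∈ T i <;> by_cases h2 : k ∈ S j <;> simp [h1, h2]
    rw [Finset.sum_congr rfl fun k _ => h1 k, Finset.sum_boole, Finset.filter_univ_mem]
  have hcard01 : ∀ i j, (T i ∩ S j).card = 0 ∨ (T i ∩ S j).card = 1 := by
    intro i j
    rcases h01 i j with h | h
    · left; have := hcardR i j; rw [h] at this; exact_mod_cast this
    · right; have := hcardR i j; rw [h] at this; exact_mod_cast this
  have hcard_le : ∀ i j, (T i ∩ S j).card ≤ 1 := fun i j => by
    rcases hcard01 i j with h | h <;> omega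
  have hTinj : Function.Injective T := by
    intro i i' h
    apply hrows
    show M i = M i'
    funext j
    rw [key i j, key i' j]
    exact Finset.sum_congr rfl fun k _ => by rw [eT, eT, h]
  have hSinj : Function.Injective S := by
    intro j j' h
    apply hcols
    show (fun i => M i j) = fun i => M i j'
    funext i
    rw [key i j, key i j']
    exact Finset.sum_congr rfl fun k _ => by rw [eS, eS, h]
  -- split the pairs according to the intersection size
  set P1 := univ.filter (fun p : Fin m × Fin n => (T p.1 ∩ S p.2).card = 1) with hP1def
  set P0 := univ.filter (fun p : Fin m × Fin n => (T p.1 ∩ S p.2).card = 0) with hP0def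
  have hsplit : m * n = P1.card + P0.card := by
    have h1 := Finset.card_filter_add_card_filter_not (s := univ)
      (p := fun p : Fin m × Fin n => (T p.1 ∩ S p.2).card = 1)
    have h2 : univ.filter (fun p : Fin m × Fin n => ¬ (T p.1 ∩ S p.2).card = 1) = P0 := by
      rw [hP0def]
      apply Finset.filter_congr
      intro p _
      have := hcard_le p.1 p.2
      constructor <;> intro <;> omega
    rw [h2] at h1
    rw [hP1def, h1, Finset.card_univ]
    simp [Fintype.card_prod]
  -- bound on pairs with intersection of size one
  have hP1card : P1.card ≤ ∑ U : Finset (Fin d), U.card := by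
    rw [Finset.card_eq_sum_card_fiberwise (f := fun p => T p.1 ∪ S p.2)
      (t := univ) (fun p _ => mem_univ _)]
    apply Finset.sum_le_sum
    intro U _
    have hmain := Finset.card_le_card_of_injOn
      (s := P1.filter fun p => T p.1 ∪ S p.2 = U)
      (f := fun p => T p.1 ∩ S p.2) (t := U.powersetCard 1)
      (fun p hp => by
        dsimp only
        rw [Finset.mem_coe, Finset.mem_filter] at hp
        obtain ⟨hp1, hpU⟩ := hp
        rw [hP1def, Finset.mem_filter] at hp1
        rw [Finset.mem_coe, Finset.mem_powersetCard]
        exact ⟨(Finset.inter_subset_left).trans (hpU ▸ Finset.subset_union_left), hp1.2⟩)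
      (fun p hp q hq hpq => by
        dsimp only at hpq
        simp only [Finset.coe_filter, Set.mem_setOf_eq] at hp hq
        obtain ⟨hp1, hpU⟩ := hp
        obtain ⟨hq1, hqU⟩ := hq
        rw [hP1def, Finset.mem_filter] at hp1 hq1
        obtain ⟨x, hx⟩ := Finset.card_eq_one.mp hp1.2
        -- a single sided claim
        have claim : ∀ (i i' : Fin m) (j j' : Fin n), T i ∩ S j = T i' ∩ S j' →
            T i ∩ S j = {x} → T i ∪ S j = T i' ∪ S j' → T i ⊆ T i' := by
          intro i i' j j' hEq hSing hU y hy
          have hxTi : x ∈ T i ∩ S j := hSing ▸ Finset.mem_singleton_self x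
          have hxTi' : x ∈ T i' ∩ S j' := (hEq ▸ hSing) ▸ Finset.mem_singleton_self x
          have hyU : y ∈ T i' ∪ S j' := hU ▸ Finset.mem_union_left _ hy
          rcases Finset.mem_union.mp hyU with hy' | hy'
          · exact hy'
          · -- y and x both lie in T i ∩ S j'
            have h1 : y ∈ T i ∩ S j' := Finset.mem_inter.mpr ⟨hy, hy'⟩
            have h2 : x ∈ T i ∩ S j' := Finset.mem_inter.mpr
              ⟨(Finset.mem_inter.mp hxTi).1, (Finset.mem_inter.mp hxTi').2⟩
            have := Finset.card_le_one.mp (hcard_le i j') y h1 x h2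
            rw [this]
            exact (Finset.mem_inter.mp hxTi').1
        have hTT : T p.1 = T q.1 := by
          apply Finset.Subset.antisymm
          · exact claim p.1 q.1 p.2 q.2 hpq hx (hpU.trans hqU.symm)
          · exact claim q.1 p.1 q.2 p.2 hpq.symm (hpq ▸ hx) (hqU.trans hpU.symm)
        have hSS : S p.2 = S q.2 := by
          have h1 : ∀ (i : Fin m) (j : Fin n), T i ∪ S j = U → T i ∩ S j = {x} →
              S j = (U \ T i) ∪ {x} := by
            intro i j hU hSing
            ext z
            simp only [Finset.mem_union, Finset.mem_sdiff, Finset.mem_singleton]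
            constructor
            · intro hz
              by_cases hzT : z ∈ T i
              · right
                have : z ∈ T i ∩ S j := Finset.mem_inter.mpr ⟨hzT, hz⟩
                rwa [hSing, Finset.mem_singleton] at this
              · exact Or.inl ⟨hU ▸ Finset.mem_union_right _ hz, hzT⟩
            · rintro (⟨hzU, hzT⟩ | rfl)
              · rcases Finset.mem_union.mp (hU ▸ hzU : z ∈ T i ∪ S j) with h | h
                · exact absurd h hzT
                · exact h
              · exact (Finset.mem_inter.mp (hSing ▸ Finset.mem_singleton_self z)).2
          rw [h1 p.1 p.2 hpU hx, h1 q.1 q.2 hqU (hpq ▸ hx), hTT]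
        exact Prod.ext (hTinj hTT) (hSinj hSS))
    rw [Finset.card_powersetCard, Nat.choose_one_right] at hmain
    exact hmain
  -- bound on disjoint pairs
  have hP0card : P0.card ≤ ∑ U : Finset (Fin d), (U.card + 1) := by
    rw [Finset.card_eq_sum_card_fiberwise (f := fun p => T p.1 ∪ S p.2)
      (t := univ) (fun p _ => mem_univ _)]
    apply Finset.sum_le_sum
    intro U _
    set fib := P0.filter (fun p => T p.1 ∪ S p.2 = U) with hfib
    have hmem : ∀ p ∈ fib, (T p.1 ∩ S p.2).card = 0 ∧ T p.1 ∪ S p.2 = U := by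
      intro p hp
      rw [hfib, Finset.mem_filter] at hp
      obtain ⟨hp1, hp2⟩ := hp
      rw [hP0def, Finset.mem_filter] at hp1
      exact ⟨hp1.2, hp2⟩
    have hSrec : ∀ p ∈ fib, S p.2 = U \ T p.1 := by
      intro p hp
      obtain ⟨h0, hU⟩ := hmem p hp
      have hdisj : Disjoint (T p.1) (S p.2) :=
        Finset.disjoint_iff_inter_eq_empty.mpr (Finset.card_eq_zero.mp h0)
      rw [← hU, Finset.union_sdiff_cancel_left hdisj]
    have hinj2 : Set.InjOn (fun p : Fin m × Fin n => T p.1) fib := by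
      intro p hp q hq hpq
      dsimp only at hpq
      have hp' := hSrec p (by simpa using hp)
      have hq' := hSrec q (by simpa using hq)
      have hSS : S p.2 = S q.2 := by rw [hp', hq', hpq]
      exact Prod.ext (hTinj hpq) (hSinj hSS)
    rw [← Finset.card_image_of_injOn hinj2]
    apply close_family_card_le U
    · intro A hA
      obtain ⟨p, hp, rfl⟩ := Finset.mem_image.mp hA
      intro z hz
      rw [← (hmem p hp).2]
      exact Finset.mem_union_left _ hz
    · intro A hA B hB
      obtain ⟨p, hp, rfl⟩ := Finset.mem_image.mp hA
      obtain ⟨q, hq, rfl⟩ := Finset.mem_image.mp hB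
      have hsub2 : T p.1 \ T q.1 ⊆ T p.1 ∩ S q.2 := by
        intro y hy
        obtain ⟨hy1, hy2⟩ := Finset.mem_sdiff.mp hy
        refine Finset.mem_inter.mpr ⟨hy1, ?_⟩
        have hyU : y ∈ U := by rw [← (hmem p hp).2]; exact Finset.mem_union_left _ hy1
        rw [← (hmem q hq).2] at hyU
        rcases Finset.mem_union.mp hyU with h | h
        · exact absurd h hy2
        · exact h
      exact (Finset.card_le_card hsub2).trans (hcard_le p.1 q.2)
  -- compute the sums
  have hsum2 : ∑ U : Finset (Fin d), (U.card + 1) = (∑ U : Finset (Fin d), U.card) + 2 ^ d := by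
    rw [Finset.sum_add_distrib, Finset.sum_const, Finset.card_univ, Fintype.card_finset,
      Fintype.card_fin, smul_eq_mul, mul_one]
  have hB : (∑ U : Finset (Fin d), U.card) + (∑ U : Finset (Fin d), U.card) = d * 2 ^ d := by
    have hcompl : (∑ U : Finset (Fin d), U.card) =
        ∑ U : Finset (Fin d), (Uᶜ : Finset (Fin d)).card := by
      apply Fintype.sum_bijective (fun U : Finset (Fin d) => (Uᶜ : Finset (Fin d)))
        (Function.Involutive.bijective fun U : Finset (Fin d) => compl_compl U)
      intro U
      rw [compl_compl]
    calc (∑ U : Finset (Fin d), U.card) + (∑ U : Finset (Fin d), U.card)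
        = ∑ U : Finset (Fin d), (U.card + (Uᶜ : Finset (Fin d)).card) := by
          rw [Finset.sum_add_distrib, ← hcompl]
      _ = ∑ _U : Finset (Fin d), d := by
          apply Finset.sum_congr rfl
          intro U _
          rw [Finset.card_add_card_compl, Fintype.card_fin]
      _ = d * 2 ^ d := by
          rw [Finset.sum_const, Finset.card_univ, Fintype.card_finset, Fintype.card_fin,
            smul_eq_mul, mul_comm]
  calc m * n = P1.card + P0.card := hsplit
    _ ≤ (∑ U : Finset (Fin d), U.card) + (∑ U : Finset (Fin d), (U.card + 1)) :=
        Nat.add_le_add hP1card hP0card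
    _ = d * 2 ^ d + 2 ^ d := by rw [hsum2, ← Nat.add_assoc, hB]
    _ = (d + 1) * 2 ^ d := by ring
end

section
/- Let M be an m × n matrix with entries in {0,1} (viewed as a real matrix) of rank d, having no two equal rows. Then m ≤ 2^d. -/
/-- A 0/1 matrix of real rank `d` with pairwise distinct rows has at most `2 ^ d` rows. -/
theorem zero_one_matrix_rows_le (m n d : ℕ) (M : Matrix (Fin m) (Fin n) ℝ)
    (h01 : ∀ i j, M i j = 0 ∨ M i j = 1)
    (hrank : M.rank = d)
    (hrows : Function.Injective fun i => M i) :
    m ≤ 2 ^ d := by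
  classical
  -- columns of M
  obtain ⟨s, hs_sub, hs_span, hs_li⟩ :=
    exists_linearIndependent ℝ (Set.range M.transpose)
  have hsf : s.Finite := (Set.finite_range _).subset hs_sub
  haveI : Fintype s := hsf.fintype
  -- cardinality of s is d
  have hcard : s.toFinset.card = d := by
    have := finrank_span_set_eq_card (s := s) hs_li
    rw [hs_span] at this
    exact this.symm.trans ((Matrix.rank_eq_finrank_span_cols M).symm.trans hrank)
  -- entries of columns are 0 or 1
  have h01' : ∀ c ∈ s, ∀ i, (c : Fin m → ℝ) i = 0 ∨ c i = 1 := by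
    intro c hc i
    obtain ⟨j, rfl⟩ := hs_sub hc
    exact h01 i j
  -- the map sending a row to its values on the chosen columns
  set f : Fin m → (s → Bool) := fun i c => decide ((c : Fin m → ℝ) i = 1) with hf
  have hinj : Function.Injective f := by
    intro i i' h
    apply hrows
    funext j
    -- rows i, i' agree on all columns in s
    have hagree : ∀ c ∈ s, (c : Fin m → ℝ) i = c i' := by
      intro c hc
      have hb : decide ((c : Fin m → ℝ) i = 1) = decide ((c : Fin m → ℝ) i' = 1) :=
        congrFun h ⟨c, hc⟩
      rcases h01' c hc i with h1 | h1 <;> rcases h01' c hc i' with h2 | h2 <;>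
        simp [h1, h2] at hb ⊢
    -- the linear functional v ↦ v i - v i' vanishes on span s
    let φ : (Fin m → ℝ) →ₗ[ℝ] ℝ :=
      (LinearMap.proj i : (Fin m → ℝ) →ₗ[ℝ] ℝ) - LinearMap.proj i'
    have hker : Submodule.span ℝ s ≤ LinearMap.ker φ := by
      rw [Submodule.span_le]
      intro c hc
      simp only [SetLike.mem_coe, LinearMap.mem_ker, φ, LinearMap.sub_apply,
        LinearMap.proj_apply]
      rw [hagree c hc]
      ring
    have hcol : (M.transpose j) ∈ Submodule.span ℝ s := by
      rw [hs_span]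
      exact Submodule.subset_span ⟨j, rfl⟩
    have := hker hcol
    simp only [LinearMap.mem_ker, φ, LinearMap.sub_apply, LinearMap.proj_apply] at this
    have : M.transpose j i = M.transpose j i' := by linarith
    simpa [Matrix.transpose_apply] using this
  have := Fintype.card_le_of_injective f hinj
  simpa [Fintype.card_fun, ← hcard, Set.toFinset_card] using this
end

section
/- Let M be an m × n matrix with entries in {0,1} (viewed as a real matrix) of rank d, having no two equal rows, and suppose m = 2^d. Then M contains the d × d identity matrix as a submatrix (i.e., there exist d rows and d columns of M whose corresponding submatrix is the identity). -/
open Module Submodule Matrix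

/-- A 0/1 matrix of real rank `d` with pairwise distinct rows and exactly `2 ^ d` rows
contains the `d × d` identity matrix as a submatrix. -/
theorem zero_one_matrix_max_rows_has_identity (m n d : ℕ) (M : Matrix (Fin m) (Fin n) ℝ)
    (h01 : ∀ i j, M i j = 0 ∨ M i j = 1)
    (hrank : M.rank = d)
    (hrows : Function.Injective fun i => M i)
    (hm : m = 2 ^ d) :
    ∃ (ρ : Fin d → Fin m) (γ : Fin d → Fin n),
      Function.Injective ρ ∧ Function.Injective γ ∧
      ∀ i j, M (ρ i) (γ j) = if i = j then 1 else 0 := by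
  classical
  -- column space
  obtain ⟨t, hts, htspan, htli⟩ := exists_linearIndependent ℝ (Set.range Mᵀ)
  have htfin : t.Finite := htli.setFinite
  haveI := htfin.fintype
  have hcols : finrank ℝ (span ℝ (Set.range Mᵀ)) = d := by
    exact (Matrix.rank_eq_finrank_span_cols M).symm.trans hrank
  have hcard : Fintype.card t = d := by
    rw [← Set.toFinset_card, ← finrank_span_set_eq_card htli, htspan, hcols]
  -- index the chosen columns by Fin d
  have e : Fin d ≃ t := (Fintype.equivFinOfCardEq hcard).symm
  have hmem : ∀ x : t, (x : Fin m → ℝ) ∈ Set.range Mᵀ := fun x => hts x.2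
  choose γ0 hγ0 using hmem
  set γ : Fin d → Fin n := fun k => γ0 (e k) with hγdef
  have hγcol : ∀ k, Mᵀ (γ k) = (e k : Fin m → ℝ) := fun k => hγ0 (e k)
  have hγinj : Function.Injective γ := by
    intro a b hab
    apply e.injective
    apply Subtype.ext
    rw [← hγcol a, ← hγcol b, hab]
  -- row spaces
  set M' : Matrix (Fin m) (Fin d) ℝ := M.submatrix id γ with hM'def
  have hrangeT : Set.range M'ᵀ = (t : Set (Fin m → ℝ)) := by
    ext v
    constructor
    · rintro ⟨k, rfl⟩
      have : M'ᵀ k = Mᵀ (γ k) := rfl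
      rw [this, hγcol]; exact (e k).2
    · rintro hv
      refine ⟨e.symm ⟨v, hv⟩, ?_⟩
      have : M'ᵀ (e.symm ⟨v, hv⟩) = Mᵀ (γ (e.symm ⟨v, hv⟩)) := rfl
      rw [this, hγcol, Equiv.apply_symm_apply]
  have hrankM' : finrank ℝ (span ℝ (Set.range M')) = d := by
    rw [show finrank ℝ (span ℝ (Set.range M')) = M'.rank from (Matrix.rank_eq_finrank_span_row M').symm,
      Matrix.rank_eq_finrank_span_cols, show Set.range M'.col = Set.range M'ᵀ from rfl, hrangeT,
      htspan, hcols]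
  have hRS : finrank ℝ (span ℝ (Set.range M)) = d := by
    exact (Matrix.rank_eq_finrank_span_row M).symm.trans hrank
  -- restriction map
  set φ : (Fin n → ℝ) →ₗ[ℝ] (Fin d → ℝ) := LinearMap.funLeft ℝ ℝ γ with hφdef
  have hφrow : ∀ i, φ (M i) = M' i := fun i => rfl
  set RS := span ℝ (Set.range M) with hRSdef
  have hmapφ : RS.map φ = span ℝ (Set.range M') := by
    rw [hRSdef, Submodule.map_span,
      show (⇑φ '' Set.range M) = Set.range (⇑φ ∘ fun i => M i) from (Set.range_comp _ _).symm]
    rfl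
  -- injectivity of φ on RS
  have hker : ∀ v ∈ RS, φ v = 0 → v = 0 := by
    have h1 := (φ.domRestrict RS).finrank_range_add_finrank_ker
    rw [LinearMap.range_domRestrict, hmapφ, hrankM', hRS] at h1
    have h2 : finrank ℝ (LinearMap.ker (φ.domRestrict RS)) = 0 := by omega
    have h3 : LinearMap.ker (φ.domRestrict RS) = ⊥ :=
      Submodule.finrank_eq_zero.mp h2
    intro v hv hφv
    have : (⟨v, hv⟩ : RS) ∈ LinearMap.ker (φ.domRestrict RS) := by
      simp [LinearMap.mem_ker, LinearMap.domRestrict_apply, hφv]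
    rw [h3, Submodule.mem_bot] at this
    exact congrArg Subtype.val this
  -- the boolean pattern map
  set F : Fin m → (Fin d → Bool) := fun i j => decide (M i (γ j) = 1) with hFdef
  have hF1 : ∀ i j, M i (γ j) = if F i j then 1 else 0 := by
    intro i j
    rcases h01 i (γ j) with h | h <;> simp [hFdef, h]
  have hFinj : Function.Injective F := by
    intro i i' h
    have hrow : M i = M i' := by
      have hsub : M i - M i' ∈ RS := sub_mem (subset_span ⟨i, rfl⟩) (subset_span ⟨i', rfl⟩)
      have hφ0 : φ (M i - M i') = 0 := by
        rw [map_sub]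
        ext j
        have := congrFun h j
        simp only [Pi.sub_apply, Pi.zero_apply]
        rw [hφdef]
        simp only [LinearMap.funLeft_apply]
        rw [hF1 i j, hF1 i' j, this]
        ring
      have := hker _ hsub hφ0
      exact sub_eq_zero.mp this
    exact hrows hrow
  have hFbij : Function.Bijective F := by
    have : Fintype.card (Fin m) = Fintype.card (Fin d → Bool) := by
      simp [hm]
    exact (Fintype.bijective_iff_injective_and_card F).mpr ⟨hFinj, this⟩
  -- pick rows giving indicator patterns
  have hsurj := hFbij.2
  choose ρ hρ using fun k : Fin d => hsurj (fun j => decide (j = k))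
  refine ⟨ρ, γ, ?_, hγinj, ?_⟩
  · intro a b hab
    have h1 := congrFun (hρ a) a
    have h2 := congrFun (hρ b) a
    rw [hab] at h1
    simpa using h1.symm.trans h2
  · intro i j
    have h1 : F (ρ i) j = decide (j = i) := congrFun (hρ i) j
    rw [hF1 (ρ i) j, h1]
    by_cases hij : i = j <;> simp [hij, eq_comm]
end

section
/- Let M be an m × n matrix with entries in {0,1} (viewed as a real matrix) of rank d, having no two equal rows and no two equal columns, and suppose m = 2^d. Then n ≤ d + 1. -/
open Submodule Module Set Function Matrix

/-- A 0/1 matrix of real rank `d` with pairwise distinct rows, pairwise distinct columns,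
and exactly `2 ^ d` rows has at most `d + 1` columns. -/
theorem zero_one_matrix_max_rows_cols_le (m n d : ℕ) (M : Matrix (Fin m) (Fin n) ℝ)
    (h01 : ∀ i j, M i j = 0 ∨ M i j = 1)
    (hrank : M.rank = d)
    (hrows : Function.Injective fun i => M i)
    (hcols : Function.Injective fun j i => M i j)
    (hm : m = 2 ^ d) :
    n ≤ d + 1 := by
  classical
  set col : Fin n → (Fin m → ℝ) := fun j i => M i j with hcoldef
  have hcolT : Set.range Mᵀ = Set.range col := rfl
  obtain ⟨b, hbsub, hbspan, hbind⟩ := exists_linearIndependent ℝ (Set.range col)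
  have hbfin : b.Finite := hbind.setFinite
  haveI := hbfin.fintype
  -- index set J
  let J : Finset (Fin n) := Finset.univ.filter (fun j => col j ∈ b)
  have hJim : J.image col = hbfin.toFinset := by
    ext x
    simp only [Finset.mem_image, Set.Finite.mem_toFinset, J, Finset.mem_filter,
      Finset.mem_univ, true_and]
    constructor
    · rintro ⟨j, hj, rfl⟩; exact hj
    · intro hx
      obtain ⟨j, rfl⟩ := hbsub hx
      exact ⟨j, hx, rfl⟩
  have hJcard : J.card = d := by
    have h1 : (J.image col).card = J.card :=
      Finset.card_image_of_injective _ hcols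
    have h2 : finrank ℝ (span ℝ b) = d := by
      rw [Matrix.rank_eq_finrank_span_cols, (show range M.col = range col from rfl), ← hbspan] at hrank
      exact hrank
    rw [finrank_span_set_eq_card hbind] at h2
    rw [← h2, ← h1, hJim, Set.Finite.card_toFinset, Set.toFinset_card]
  -- every column is a combination of the J-columns
  have hmem : ∀ j, col j ∈ span ℝ (Set.range fun k : {k // k ∈ J} => col k) := by
    intro j
    have : Set.range (fun k : {k // k ∈ J} => col (k : Fin n)) = b := by
      ext x
      simp only [Set.mem_range, Subtype.exists, J, Finset.mem_filter, Finset.mem_univ, true_and]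
      constructor
      · rintro ⟨k, hk, rfl⟩; exact hk
      · intro hx; obtain ⟨k, rfl⟩ := hbsub hx; exact ⟨k, hx, rfl⟩
    rw [this, hbspan]
    exact subset_span ⟨j, rfl⟩
  have hC : ∀ j, ∃ c : {k // k ∈ J} → ℝ, ∀ i, M i j = ∑ k, c k * M i (k : Fin n) := by
    intro j
    obtain ⟨c, hc⟩ := (mem_span_range_iff_exists_fun ℝ).1 (hmem j)
    refine ⟨c, fun i => ?_⟩
    have := congrFun hc i
    simp only [Finset.sum_apply, Pi.smul_apply, smul_eq_mul, col] at this
    exact this.symm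
  choose c hc using hC
  -- rows restricted to J, as boolean patterns
  let r : Fin m → ({k // k ∈ J} → Bool) := fun i k => if M i (k : Fin n) = 1 then true else false
  have rinj : Function.Injective r := by
    intro i i' h
    have hJeq : ∀ k : {k // k ∈ J}, M i (k : Fin n) = M i' (k : Fin n) := by
      intro k
      have := congrFun h k
      simp only [r] at this
      rcases h01 i k with h1 | h1 <;> rcases h01 i' k with h2 | h2 <;>
        simp [h1, h2] at this ⊢
    have : ∀ j, M i j = M i' j := fun j => by
      rw [hc j i, hc j i']
      exact Finset.sum_congr rfl fun k _ => by rw [hJeq k]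
    exact hrows (funext this)
  have rsurj : Function.Surjective r := by
    have hcard : Fintype.card (Fin m) = Fintype.card ({k // k ∈ J} → Bool) := by
      simp [Fintype.card_fun, Fintype.card_coe, hJcard, hm]
    exact ((Fintype.bijective_iff_injective_and_card r).2 ⟨rinj, hcard⟩).2
  -- find rows realizing patterns
  have hrow : ∀ v : {k // k ∈ J} → Bool, ∃ i, ∀ k : {k // k ∈ J},
      M i (k : Fin n) = if v k then 1 else 0 := by
    intro v
    obtain ⟨i, hi⟩ := rsurj v
    refine ⟨i, fun k => ?_⟩
    have := congrFun hi k
    simp only [r] at this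
    rcases h01 i k with h1 | h1 <;> simp [h1] at this ⊢ <;> simp [this]
  -- each coefficient is 0 or 1
  have hc01 : ∀ j (k : {k // k ∈ J}), c j k = 0 ∨ c j k = 1 := by
    intro j k
    obtain ⟨i, hi⟩ := hrow (fun l => l = k)
    have : M i j = c j k := by
      rw [hc j i]
      rw [Finset.sum_eq_single k]
      · rw [hi k]; simp
      · intro l _ hl; rw [hi l]; simp [hl]
      · simp
    rw [← this]; exact h01 i j
  -- no two coefficients are both 1
  have hpair : ∀ j (k k' : {k // k ∈ J}), k ≠ k' → ¬(c j k = 1 ∧ c j k' = 1) := by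
    rintro j k k' hkk' ⟨h1, h2⟩
    obtain ⟨i, hi⟩ := hrow (fun l => l = k || l = k')
    have : M i j = c j k + c j k' := by
      rw [hc j i, ← Finset.sum_subset (Finset.subset_univ {k, k'})]
      · rw [Finset.sum_pair hkk', hi k, hi k']
        simp [hkk']
      · intro l _ hl
        simp only [Finset.mem_insert, Finset.mem_singleton] at hl
        push_neg at hl
        rw [hi l]
        simp [hl.1, hl.2]
    rw [h1, h2] at this
    rcases h01 i j with h | h <;> rw [h] at this <;> norm_num at this
  -- each column is either zero or equal to one of the J-columns
  have hcol : ∀ j, (∀ i, M i j = 0) ∨ ∃ k : {k // k ∈ J}, ∀ i, M i j = M i (k : Fin n) := by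
    intro j
    by_cases hex : ∃ k : {k // k ∈ J}, c j k = 1
    · obtain ⟨k0, hk0⟩ := hex
      refine Or.inr ⟨k0, fun i => ?_⟩
      rw [hc j i, Finset.sum_eq_single k0]
      · rw [hk0, one_mul]
      · intro l _ hl
        rcases hc01 j l with h | h
        · rw [h, zero_mul]
        · exact absurd ⟨h, hk0⟩ (hpair j l k0 hl)
      · simp
    · push_neg at hex
      refine Or.inl fun i => ?_
      rw [hc j i]
      apply Finset.sum_eq_zero
      intro l _
      rcases hc01 j l with h | h
      · rw [h, zero_mul]
      · exact absurd h (hex l)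
  -- define the classifying map
  let F : Fin n → Option {k // k ∈ J} := fun j =>
    if h : ∃ k : {k // k ∈ J}, ∀ i, M i j = M i (k : Fin n) then some h.choose else none
  have Finj : Function.Injective F := by
    intro j1 j2 h
    by_cases h1 : ∃ k : {k // k ∈ J}, ∀ i, M i j1 = M i (k : Fin n) <;>
      by_cases h2 : ∃ k : {k // k ∈ J}, ∀ i, M i j2 = M i (k : Fin n)
    · simp only [F, dif_pos h1, dif_pos h2, Option.some.injEq] at h
      apply hcols
      funext i
      show M i j1 = M i j2
      rw [h1.choose_spec i, h, ← h2.choose_spec i]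
    · simp only [F] at h
      rw [dif_pos h1, dif_neg h2] at h
      exact (Option.some_ne_none _ h).elim
    · simp only [F] at h
      rw [dif_neg h1, dif_pos h2] at h
      exact (Option.some_ne_none _ h.symm).elim
    · have z1 := (hcol j1).resolve_right h1
      have z2 := (hcol j2).resolve_right h2
      apply hcols
      funext i
      show M i j1 = M i j2
      rw [z1 i, z2 i]
  have := Fintype.card_le_of_injective F Finj
  simpa [Fintype.card_option, Fintype.card_coe, hJcard] using this
end

section
/- Let M₁ and M₂ be matroids on subsets E₁ and E₂ of a common finite ground type, with E₁ ∩ E₂ = {p}, where p is neither a loop nor a coloop of M₁ or of M₂. For i = 1, 2, let B(Mᵢ) be the convex hull in ℝ^{Eᵢ-coordinates} (functions from the ground type to ℝ supported on Eᵢ) of the characteristic vectors of the bases of Mᵢ, and let Q = { (x, y) ∈ B(M₁) × B(M₂) : x_p + y_p = 1 }. Let φ map a pair (x, y) to the vector z with z_e = x_e for e ∈ E₁ \ {p}, z_e = y_e for e ∈ E₂ \ {p}, and z_e = 0 otherwise. Then φ is injective on Q, and the image φ(Q) equals the convex hull of the characteristic vectors of the sets B₁ ∪ B₂ − p, where B₁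 is a basis of M₁, B₂ is a basis of M₂, and p belongs to exactly one of B₁, B₂ (these sets are the bases of the 2-sum M₁ ⊕₂ M₂). -/
/-- The base polytope of a matroid: the convex hull of the characteristic (indicator)
vectors of its bases, inside the space of real-valued functions on the ground type. -/
def matroidBasePolytope {α : Type*} (M : Matroid α) : Set (α → ℝ) :=
  convexHull ℝ {x : α → ℝ | ∃ B, M.IsBase B ∧ x = Set.indicator B 1}

section Aux

variable {α : Type*}

lemma matroidBasePolytope_rep {M : Matroid α} {x : α → ℝ}
    (hx : x ∈ matroidBasePolytope M) :
    ∃ (ι : Type) (t : Finset ι) (w : ι → ℝ) (B : ι → Set α),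
      (∀ i ∈ t, 0 ≤ w i) ∧ ∑ i ∈ t, w i = 1 ∧ (∀ i ∈ t, M.IsBase (B i)) ∧
      ∀ e, x e = ∑ i ∈ t, w i * Set.indicator (B i) 1 e := by
  rw [matroidBasePolytope, _root_.convexHull_eq] at hx
  obtain ⟨ι, t, w, z, hw0, hw1, hz, hcm⟩ := hx
  classical
  choose! B hB hzB using hz
  refine ⟨ι, t, w, B, hw0, hw1, hB, fun e => ?_⟩
  rw [← hcm, Finset.centerMass_eq_of_sum_1 _ _ hw1, Finset.sum_apply]
  refine Finset.sum_congr rfl fun i hi => ?_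
  rw [hzB i hi]
  rfl

lemma sum_indicator_one [Fintype α] (B : Set α) :
    ∑ e, Set.indicator B (1 : α → ℝ) e = (B.ncard : ℝ) := by
  classical
  have h : Finset.univ.filter (fun e => e ∈ B) = B.toFinset := by ext a; simp
  rw [Set.ncard_eq_toFinset_card' B, ← h]
  simp [Set.indicator_apply]

lemma basePolytope_zero {M : Matroid α} {x : α → ℝ}
    (hx : x ∈ matroidBasePolytope M) {e : α} (he : e ∉ M.E) : x e = 0 := by
  obtain ⟨ι, t, w, B, hw0, hw1, hB, hrep⟩ := matroidBasePolytope_rep hx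
  rw [hrep e]
  refine Finset.sum_eq_zero fun i hi => ?_
  rw [Set.indicator_of_notMem (fun hmem => he ((hB i hi).subset_ground hmem))]
  ring

lemma basePolytope_sum [Fintype α] {M : Matroid α} {x : α → ℝ}
    (hx : x ∈ matroidBasePolytope M) {B₀ : Set α} (hB₀ : M.IsBase B₀) :
    ∑ e, x e = (B₀.ncard : ℝ) := by
  obtain ⟨ι, t, w, B, hw0, hw1, hB, hrep⟩ := matroidBasePolytope_rep hx
  calc ∑ e, x e = ∑ e, ∑ i ∈ t, w i * Set.indicator (B i) 1 e := by
        exact Finset.sum_congr rfl fun e _ => hrep e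
    _ = ∑ i ∈ t, ∑ e, w i * Set.indicator (B i) 1 e := Finset.sum_comm
    _ = ∑ i ∈ t, w i * (B₀.ncard : ℝ) := by
        refine Finset.sum_congr rfl fun i hi => ?_
        rw [← Finset.mul_sum, sum_indicator_one, (hB i hi).ncard_eq_ncard_of_isBase hB₀]
    _ = (B₀.ncard : ℝ) := by rw [← Finset.sum_mul, hw1, one_mul]

end Aux


/-- Let `M₁`, `M₂` be matroids on a common finite ground type with `M₁.E ∩ M₂.E = {p}`,
where `p` is neither a loop (it lies in some basis) nor a coloop (it is missing from some
basis) of either matroid. Let `Q` be the intersection of `B(M₁) × B(M₂)` with the hyperplane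
`x p + y p = 1`, and let `φ` glue a pair `(x, y)` into the function equal to `x` on
`M₁.E \ {p}`, to `y` on `M₂.E \ {p}` and `0` elsewhere. Then `φ` is injective on `Q` and
maps `Q` onto the base polytope of the 2-sum `M₁ ⊕₂ M₂`. -/
theorem twoSum_basePolytope {α : Type*} [Fintype α] (M₁ M₂ : Matroid α) (p : α)
    (hE : M₁.E ∩ M₂.E = {p})
    (hp₁ : (∃ B, M₁.IsBase B ∧ p ∈ B) ∧ (∃ B, M₁.IsBase B ∧ p ∉ B))
    (hp₂ : (∃ B, M₂.IsBase B ∧ p ∈ B) ∧ (∃ B, M₂.IsBase B ∧ p ∉ B)) :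
    Set.InjOn
        (fun q : (α → ℝ) × (α → ℝ) => fun e =>
          Set.indicator (M₁.E \ {p}) q.1 e + Set.indicator (M₂.E \ {p}) q.2 e)
        {q : (α → ℝ) × (α → ℝ) |
          q.1 ∈ matroidBasePolytope M₁ ∧ q.2 ∈ matroidBasePolytope M₂ ∧ q.1 p + q.2 p = 1} ∧
      (fun q : (α → ℝ) × (α → ℝ) => fun e =>
          Set.indicator (M₁.E \ {p}) q.1 e + Set.indicator (M₂.E \ {p}) q.2 e) ''
        {q : (α → ℝ) × (α → ℝ) |
          q.1 ∈ matroidBasePolytope M₁ ∧ q.2 ∈ matroidBasePolytope M₂ ∧ q.1 p + q.2 p = 1} =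
      convexHull ℝ {z : α → ℝ | ∃ B₁ B₂ : Set α, M₁.IsBase B₁ ∧ M₂.IsBase B₂ ∧
        (p ∈ B₁ ↔ p ∉ B₂) ∧ z = Set.indicator ((B₁ ∪ B₂) \ {p}) 1} := by
  classical
  have hpmem : p ∈ M₁.E ∩ M₂.E := by rw [hE]; exact rfl
  -- separation of the two ground sets off p
  have hsep : ∀ e, e ∈ M₁.E \ {p} → e ∉ M₂.E \ {p} := by
    intro e he₁ he₂
    have : e ∈ M₁.E ∩ M₂.E := ⟨he₁.1, he₂.1⟩
    rw [hE] at this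
    exact he₁.2 this
  have hdisj : ∀ B C : Set α, B ⊆ M₁.E → C ⊆ M₂.E →
      Disjoint (B \ {p}) (C \ {p}) := by
    intro B C hB hC
    rw [Set.disjoint_left]
    intro a ha₁ ha₂
    exact hsep a ⟨hB ha₁.1, ha₁.2⟩ ⟨hC ha₂.1, ha₂.2⟩
  constructor
  · -- injectivity
    intro q hq q' hq' hfe
    obtain ⟨h1, h2, h3⟩ := hq
    obtain ⟨h1', h2', h3'⟩ := hq'
    have hfe' : ∀ e, Set.indicator (M₁.E \ {p}) q.1 e + Set.indicator (M₂.E \ {p}) q.2 e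
        = Set.indicator (M₁.E \ {p}) q'.1 e + Set.indicator (M₂.E \ {p}) q'.2 e :=
      fun e => congrFun hfe e
    have haux1 : ∀ e ∈ M₁.E \ {p}, q.1 e = q'.1 e := by
      intro e he
      have h := hfe' e
      rwa [Set.indicator_of_mem he, Set.indicator_of_mem he,
        Set.indicator_of_notMem (hsep e he), Set.indicator_of_notMem (hsep e he),
        add_zero, add_zero] at h
    have haux2 : ∀ e ∈ M₂.E \ {p}, q.2 e = q'.2 e := by
      intro e he
      have hne : e ∉ M₁.E \ {p} := fun h' => hsep e h' he
      have h := hfe' e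
      rwa [Set.indicator_of_mem he, Set.indicator_of_mem he,
        Set.indicator_of_notMem hne, Set.indicator_of_notMem hne,
        zero_add, zero_add] at h
    have hoff1 : ∀ e, e ≠ p → q.1 e = q'.1 e := by
      intro e hep
      by_cases heE : e ∈ M₁.E
      · exact haux1 e ⟨heE, hep⟩
      · rw [basePolytope_zero h1 heE, basePolytope_zero h1' heE]
    obtain ⟨B₀, hB₀, -⟩ := hp₁.1
    have hs : ∑ e, q.1 e = (B₀.ncard : ℝ) := basePolytope_sum h1 hB₀
    have hs' : ∑ e, q'.1 e = (B₀.ncard : ℝ) := basePolytope_sum h1' hB₀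
    have herase : ∑ e ∈ Finset.univ.erase p, q.1 e = ∑ e ∈ Finset.univ.erase p, q'.1 e := by
      refine Finset.sum_congr rfl fun e he => hoff1 e (Finset.ne_of_mem_erase he)
    have hp1 : q.1 p = q'.1 p := by
      have e1 : ∑ e ∈ Finset.univ.erase p, q.1 e + q.1 p = ∑ e, q.1 e :=
        Finset.sum_erase_add _ _ (Finset.mem_univ p)
      have e2 : ∑ e ∈ Finset.univ.erase p, q'.1 e + q'.1 p = ∑ e, q'.1 e :=
        Finset.sum_erase_add _ _ (Finset.mem_univ p)
      rw [hs] at e1; rw [hs'] at e2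
      linarith
    have hq1 : q.1 = q'.1 := by
      funext e
      by_cases hep : e = p
      · rw [hep]; exact hp1
      · exact hoff1 e hep
    have hq2 : q.2 = q'.2 := by
      funext e
      by_cases hep : e = p
      · rw [hep]; linarith [h3, h3', hp1]
      · by_cases heE : e ∈ M₂.E
        · exact haux2 e ⟨heE, hep⟩
        · rw [basePolytope_zero h2 heE, basePolytope_zero h2' heE]
    exact Prod.ext hq1 hq2
  · -- image
    refine Set.Subset.antisymm ?_ (convexHull_min ?_ ?_)
    · -- image ⊆ hull
      rintro z ⟨q, ⟨h1, h2, h3⟩, rfl⟩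
      obtain ⟨ι₁, s, w, B, hw0, hw1, hB, hx⟩ := matroidBasePolytope_rep h1
      obtain ⟨ι₂, s', v, C, hv0, hv1, hC, hy⟩ := matroidBasePolytope_rep h2
      -- mass at p
      have hxp : ∑ i ∈ s.filter (fun i => p ∈ B i), w i = q.1 p := by
        rw [hx p, Finset.sum_filter]
        refine Finset.sum_congr rfl fun i hi => ?_
        by_cases hpB : p ∈ B i <;> simp [Set.indicator_apply, hpB]
      have hyp : ∑ j ∈ s'.filter (fun j => p ∈ C j), v j = q.2 p := by
        rw [hy p, Finset.sum_filter]
        refine Finset.sum_congr rfl fun j hj => ?_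
        by_cases hpC : p ∈ C j <;> simp [Set.indicator_apply, hpC]
      have hxp' : ∑ i ∈ s.filter (fun i => p ∉ B i), w i = 1 - q.1 p := by
        have := Finset.sum_filter_add_sum_filter_not s (fun i => p ∈ B i) w
        rw [hxp] at this
        linarith
      have hyp' : ∑ j ∈ s'.filter (fun j => p ∉ C j), v j = q.1 p := by
        have := Finset.sum_filter_add_sum_filter_not s' (fun j => p ∈ C j) v
        rw [hyp] at this
        linarith
      have ht0 : 0 ≤ q.1 p := by
        rw [← hxp]
        exact Finset.sum_nonneg fun i hi => hw0 i (Finset.mem_filter.mp hi).1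
      have ht1 : 0 ≤ 1 - q.1 p := by
        have : 0 ≤ q.2 p := by
          rw [← hyp]
          exact Finset.sum_nonneg fun j hj => hv0 j (Finset.mem_filter.mp hj).1
        linarith
      -- vanishing in degenerate cases
      have hwz1 : ∀ i ∈ s, p ∈ B i → q.1 p = 0 → w i = 0 := by
        intro i hi hpB ht
        have h0 : ∑ i ∈ s.filter (fun i => p ∈ B i), w i = 0 := by rw [hxp, ht]
        exact (Finset.sum_eq_zero_iff_of_nonneg
          (fun i hi => hw0 i (Finset.mem_filter.mp hi).1)).mp h0 i
          (Finset.mem_filter.mpr ⟨hi, hpB⟩)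
      have hwz2 : ∀ i ∈ s, p ∉ B i → 1 - q.1 p = 0 → w i = 0 := by
        intro i hi hpB ht
        have h0 : ∑ i ∈ s.filter (fun i => p ∉ B i), w i = 0 := by rw [hxp', ht]
        exact (Finset.sum_eq_zero_iff_of_nonneg
          (fun i hi => hw0 i (Finset.mem_filter.mp hi).1)).mp h0 i
          (Finset.mem_filter.mpr ⟨hi, hpB⟩)
      have hvz1 : ∀ j ∈ s', p ∈ C j → 1 - q.1 p = 0 → v j = 0 := by
        intro j hj hpC ht
        have h0 : ∑ j ∈ s'.filter (fun j => p ∈ C j), v j = 0 := by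
          rw [hyp]; linarith
        exact (Finset.sum_eq_zero_iff_of_nonneg
          (fun j hj => hv0 j (Finset.mem_filter.mp hj).1)).mp h0 j
          (Finset.mem_filter.mpr ⟨hj, hpC⟩)
      have hvz2 : ∀ j ∈ s', p ∉ C j → q.1 p = 0 → v j = 0 := by
        intro j hj hpC ht
        have h0 : ∑ j ∈ s'.filter (fun j => p ∉ C j), v j = 0 := by rw [hyp', ht]
        exact (Finset.sum_eq_zero_iff_of_nonneg
          (fun j hj => hv0 j (Finset.mem_filter.mp hj).1)).mp h0 j
          (Finset.mem_filter.mpr ⟨hj, hpC⟩)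
      -- the coupling
      set ν : ι₁ × ι₂ → ℝ := fun ij =>
        w ij.1 * v ij.2 / (if p ∈ B ij.1 then q.1 p else 1 - q.1 p) with hν
      set Z : ι₁ × ι₂ → (α → ℝ) := fun ij =>
        Set.indicator ((B ij.1 ∪ C ij.2) \ {p}) 1 with hZ
      set T : Finset (ι₁ × ι₂) :=
        (s ×ˢ s').filter (fun ij => p ∈ B ij.1 ↔ p ∉ C ij.2) with hT
      have hν0 : ∀ ij ∈ T, 0 ≤ ν ij := by
        intro ij hij
        obtain ⟨hmem, -⟩ := Finset.mem_filter.mp hij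
        obtain ⟨hi, hj⟩ := Finset.mem_product.mp hmem
        refine div_nonneg (mul_nonneg (hw0 _ hi) (hv0 _ hj)) ?_
        split_ifs
        exacts [ht0, ht1]
      have hrow : ∀ i ∈ s,
          ∑ j ∈ s'.filter (fun j => (p ∈ B i ↔ p ∉ C j)), ν (i, j) = w i := by
        intro i hi
        by_cases hpB : p ∈ B i
        · have hfil : s'.filter (fun j => (p ∈ B i ↔ p ∉ C j))
              = s'.filter (fun j => p ∉ C j) := by
            apply Finset.filter_congr
            intro j hj
            simp [hpB]
          rw [hfil]
          have hstep : ∀ j ∈ s'.filter (fun j => p ∉ C j),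
              ν (i, j) = w i * v j / q.1 p := by
            intro j hj
            simp only [hν, hpB, if_true]
          rw [Finset.sum_congr rfl hstep, ← Finset.sum_div, ← Finset.mul_sum, hyp']
          by_cases ht : q.1 p = 0
          · rw [ht, hwz1 i hi hpB ht]
            simp
          · field_simp
        · have hfil : s'.filter (fun j => (p ∈ B i ↔ p ∉ C j))
              = s'.filter (fun j => p ∈ C j) := by
            apply Finset.filter_congr
            intro j hj
            by_cases hpC : p ∈ C j <;> simp [hpB, hpC]
          rw [hfil]
          have hstep : ∀ j ∈ s'.filter (fun j => p ∈ C j),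
              ν (i, j) = w i * v j / (1 - q.1 p) := by
            intro j hj
            simp only [hν, hpB, if_false]
          rw [Finset.sum_congr rfl hstep, ← Finset.sum_div, ← Finset.mul_sum, hyp]
          have hq2 : q.2 p = 1 - q.1 p := by linarith
          rw [hq2]
          by_cases ht : 1 - q.1 p = 0
          · rw [ht, hwz2 i hi hpB ht]
            simp
          · field_simp
      have hcol : ∀ j ∈ s',
          ∑ i ∈ s.filter (fun i => (p ∈ B i ↔ p ∉ C j)), ν (i, j) = v j := by
        intro j hj
        by_cases hpC : p ∈ C j
        · have hfil : s.filter (fun i => (p ∈ B i ↔ p ∉ C j))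
              = s.filter (fun i => p ∉ B i) := by
            apply Finset.filter_congr
            intro i hi
            by_cases hpB : p ∈ B i <;> simp [hpB, hpC]
          rw [hfil]
          have hstep : ∀ i ∈ s.filter (fun i => p ∉ B i),
              ν (i, j) = w i * v j / (1 - q.1 p) := by
            intro i hi
            simp only [hν, (Finset.mem_filter.mp hi).2, if_false]
          rw [Finset.sum_congr rfl hstep]
          have : ∑ i ∈ s.filter (fun i => p ∉ B i), w i * v j / (1 - q.1 p)
              = (∑ i ∈ s.filter (fun i => p ∉ B i), w i) * v j / (1 - q.1 p) := by
            rw [Finset.sum_mul, Finset.sum_div]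
          rw [this, hxp']
          by_cases ht : 1 - q.1 p = 0
          · rw [ht, hvz1 j hj hpC ht]
            simp
          · field_simp
        · have hfil : s.filter (fun i => (p ∈ B i ↔ p ∉ C j))
              = s.filter (fun i => p ∈ B i) := by
            apply Finset.filter_congr
            intro i hi
            by_cases hpB : p ∈ B i <;> simp [hpB, hpC]
          rw [hfil]
          have hstep : ∀ i ∈ s.filter (fun i => p ∈ B i),
              ν (i, j) = w i * v j / q.1 p := by
            intro i hi
            simp only [hν, (Finset.mem_filter.mp hi).2, if_true]
          rw [Finset.sum_congr rfl hstep]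
          have : ∑ i ∈ s.filter (fun i => p ∈ B i), w i * v j / q.1 p
              = (∑ i ∈ s.filter (fun i => p ∈ B i), w i) * v j / q.1 p := by
            rw [Finset.sum_mul, Finset.sum_div]
          rw [this, hxp]
          by_cases ht : q.1 p = 0
          · rw [ht, hvz2 j hj hpC ht]
            simp
          · field_simp
      -- grouping sums over T
      have hgroup1 : ∀ f : ι₁ × ι₂ → ℝ, ∑ ij ∈ T, f ij
          = ∑ i ∈ s, ∑ j ∈ s'.filter (fun j => (p ∈ B i ↔ p ∉ C j)), f (i, j) := by
        intro f
        rw [hT, Finset.sum_filter, Finset.sum_product]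
        exact Finset.sum_congr rfl fun i hi => (Finset.sum_filter _ _).symm
      have hgroup2 : ∀ f : ι₁ × ι₂ → ℝ, ∑ ij ∈ T, f ij
          = ∑ j ∈ s', ∑ i ∈ s.filter (fun i => (p ∈ B i ↔ p ∉ C j)), f (i, j) := by
        intro f
        rw [hT, Finset.sum_filter, Finset.sum_product, Finset.sum_comm]
        exact Finset.sum_congr rfl fun j hj => (Finset.sum_filter _ _).symm
      have hT1 : ∑ ij ∈ T, ν ij = 1 := by
        rw [hgroup1 ν, Finset.sum_congr rfl hrow, hw1]
      -- the point identity
      have hpoint : ∀ e,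
          Set.indicator (M₁.E \ {p}) q.1 e + Set.indicator (M₂.E \ {p}) q.2 e
          = ∑ ij ∈ T, ν ij * Z ij e := by
        intro e
        have hZsplit : ∀ ij ∈ T, Z ij e
            = Set.indicator (B ij.1 \ {p}) 1 e + Set.indicator (C ij.2 \ {p}) 1 e := by
          intro ij hij
          obtain ⟨hmem, -⟩ := Finset.mem_filter.mp hij
          obtain ⟨hi, hj⟩ := Finset.mem_product.mp hmem
          have hd := hdisj (B ij.1) (C ij.2) (hB _ hi).subset_ground (hC _ hj).subset_ground
          rw [hZ]
          simp only
          rw [Set.union_diff_distrib, Set.indicator_union_of_disjoint hd]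
        have e1 : ∑ ij ∈ T, ν ij * Z ij e
            = ∑ ij ∈ T, ν ij * Set.indicator (B ij.1 \ {p}) 1 e
              + ∑ ij ∈ T, ν ij * Set.indicator (C ij.2 \ {p}) 1 e := by
          rw [← Finset.sum_add_distrib]
          refine Finset.sum_congr rfl fun ij hij => ?_
          rw [hZsplit ij hij]
          ring
        have e2 : ∑ ij ∈ T, ν ij * Set.indicator (B ij.1 \ {p}) 1 e
            = ∑ i ∈ s, w i * Set.indicator (B i \ {p}) 1 e := by
          rw [hgroup1 (fun ij => ν ij * Set.indicator (B ij.1 \ {p}) 1 e)]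
          refine Finset.sum_congr rfl fun i hi => ?_
          show ∑ j ∈ s'.filter (fun j => (p ∈ B i ↔ p ∉ C j)),
            ν (i, j) * Set.indicator (B i \ {p}) 1 e = _
          rw [← Finset.sum_mul, hrow i hi]
        have e3 : ∑ ij ∈ T, ν ij * Set.indicator (C ij.2 \ {p}) 1 e
            = ∑ j ∈ s', v j * Set.indicator (C j \ {p}) 1 e := by
          rw [hgroup2 (fun ij => ν ij * Set.indicator (C ij.2 \ {p}) 1 e)]
          refine Finset.sum_congr rfl fun j hj => ?_
          show ∑ i ∈ s.filter (fun i => (p ∈ B i ↔ p ∉ C j)),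
            ν (i, j) * Set.indicator (C j \ {p}) 1 e = _
          rw [← Finset.sum_mul, hcol j hj]
        have hL1 : Set.indicator (M₁.E \ {p}) q.1 e
            = ∑ i ∈ s, w i * Set.indicator (B i \ {p}) 1 e := by
          by_cases he : e ∈ M₁.E \ {p}
          · rw [Set.indicator_of_mem he, hx e]
            refine Finset.sum_congr rfl fun i hi => ?_
            congr 1
            by_cases heB : e ∈ B i
            · have hm : e ∈ B i \ {p} := ⟨heB, he.2⟩
              rw [Set.indicator_of_mem heB, Set.indicator_of_mem hm]
            · rw [Set.indicator_of_notMem heB,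
                Set.indicator_of_notMem (fun h => heB h.1)]
          · rw [Set.indicator_of_notMem he]
            refine (Finset.sum_eq_zero fun i hi => ?_).symm
            have : e ∉ B i \ {p} := fun h =>
              he ⟨(hB i hi).subset_ground h.1, h.2⟩
            rw [Set.indicator_of_notMem this]
            ring
        have hL2 : Set.indicator (M₂.E \ {p}) q.2 e
            = ∑ j ∈ s', v j * Set.indicator (C j \ {p}) 1 e := by
          by_cases he : e ∈ M₂.E \ {p}
          · rw [Set.indicator_of_mem he, hy e]
            refine Finset.sum_congr rfl fun j hj => ?_
            congr 1
            by_cases heC : e ∈ C j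
            · have hm : e ∈ C j \ {p} := ⟨heC, he.2⟩
              rw [Set.indicator_of_mem heC, Set.indicator_of_mem hm]
            · rw [Set.indicator_of_notMem heC,
                Set.indicator_of_notMem (fun h => heC h.1)]
          · rw [Set.indicator_of_notMem he]
            refine (Finset.sum_eq_zero fun j hj => ?_).symm
            have : e ∉ C j \ {p} := fun h =>
              he ⟨(hC j hj).subset_ground h.1, h.2⟩
            rw [Set.indicator_of_notMem this]
            ring
        rw [e1, e2, e3, hL1, hL2]
      -- conclude
      have hZmem : ∀ ij ∈ T, Z ij ∈ {z : α → ℝ | ∃ B₁ B₂ : Set α, M₁.IsBase B₁ ∧ M₂.IsBase B₂ ∧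
          (p ∈ B₁ ↔ p ∉ B₂) ∧ z = Set.indicator ((B₁ ∪ B₂) \ {p}) 1} := by
        intro ij hij
        obtain ⟨hmem, hcond⟩ := Finset.mem_filter.mp hij
        obtain ⟨hi, hj⟩ := Finset.mem_product.mp hmem
        exact ⟨B ij.1, C ij.2, hB _ hi, hC _ hj, hcond, rfl⟩
      have hmem := Finset.centerMass_mem_convexHull T hν0 (by rw [hT1]; norm_num) hZmem
      have hcm : T.centerMass ν Z = fun e =>
          Set.indicator (M₁.E \ {p}) q.1 e + Set.indicator (M₂.E \ {p}) q.2 e := by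
        rw [Finset.centerMass_eq_of_sum_1 _ _ hT1]
        funext e
        rw [Finset.sum_apply]
        simp only [Pi.smul_apply, smul_eq_mul]
        exact (hpoint e).symm
      rwa [hcm] at hmem
    · -- generators ⊆ image
      rintro z ⟨B₁, B₂, hB₁, hB₂, hxor, rfl⟩
      refine ⟨(Set.indicator B₁ 1, Set.indicator B₂ 1),
        ⟨subset_convexHull ℝ _ ⟨B₁, hB₁, rfl⟩, subset_convexHull ℝ _ ⟨B₂, hB₂, rfl⟩, ?_⟩, ?_⟩
      · show Set.indicator B₁ 1 p + Set.indicator B₂ 1 p = 1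
        by_cases hp : p ∈ B₁
        · rw [Set.indicator_of_mem hp, Set.indicator_of_notMem (hxor.mp hp)]
          norm_num
        · have hp2 : p ∈ B₂ := by
            by_contra hc; exact hp (hxor.mpr hc)
          rw [Set.indicator_of_notMem hp, Set.indicator_of_mem hp2]
          norm_num
      · funext e
        simp only
        rw [Set.indicator_indicator, Set.indicator_indicator]
        have h₁ : M₁.E \ {p} ∩ B₁ = B₁ \ {p} := by
          ext a; exact ⟨fun h => ⟨h.2, h.1.2⟩, fun h => ⟨⟨hB₁.subset_ground h.1, h.2⟩, h.1⟩⟩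
        have h₂ : M₂.E \ {p} ∩ B₂ = B₂ \ {p} := by
          ext a; exact ⟨fun h => ⟨h.2, h.1.2⟩, fun h => ⟨⟨hB₂.subset_ground h.1, h.2⟩, h.1⟩⟩
        rw [h₁, h₂, Set.union_diff_distrib,
          Set.indicator_union_of_disjoint
            (hdisj B₁ B₂ hB₁.subset_ground hB₂.subset_ground)]
    · -- convexity of the image
      have hlin : IsLinearMap ℝ (fun q : (α → ℝ) × (α → ℝ) => fun e =>
          Set.indicator (M₁.E \ {p}) q.1 e + Set.indicator (M₂.E \ {p}) q.2 e) := by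
        constructor
        · intro a b
          funext e
          simp only [Prod.fst_add, Prod.snd_add, Pi.add_apply, Set.indicator_apply]
          split_ifs <;> ring
        · intro c a
          funext e
          simp only [Prod.smul_fst, Prod.smul_snd, Pi.smul_apply, smul_eq_mul,
            Set.indicator_apply]
          split_ifs <;> ring
      have hQconv : Convex ℝ {q : (α → ℝ) × (α → ℝ) |
          q.1 ∈ matroidBasePolytope M₁ ∧ q.2 ∈ matroidBasePolytope M₂ ∧ q.1 p + q.2 p = 1} := by
        intro q hq q' hq' a b ha hb hab
        refine ⟨?_, ?_, ?_⟩
        · exact convex_convexHull ℝ _ hq.1 hq'.1 ha hb hab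
        · exact convex_convexHull ℝ _ hq.2.1 hq'.2.1 ha hb hab
        · have := hq.2.2
          have := hq'.2.2
          simp only [Prod.smul_fst, Prod.smul_snd, Prod.fst_add, Prod.snd_add,
            Pi.add_apply, Pi.smul_apply, smul_eq_mul]
          nlinarith [hq.2.2, hq'.2.2]
      exact hQconv.is_linear_image hlin
end
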